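/- arXiv:1401.5422 — 5 statements merged into one kernel-verified Lean document; each statement's English description precedes it below -/
import Mathlib

section
/- Let (B_ℓ)_{ℓ≥0} be a sequence of rational numbers with ord(B_ℓ) = −p_ℓ for every ℓ ≥ 0, and let (C_ℓ)_{ℓ≥0} be the formal inverse coefficient sequence of (B_ℓ). Then for every ℓ ≥ 0 one has ord(C_ℓ) ≥ −p_ℓ (so C_ℓ is either zero or of the form K_ℓ/2^{q_ℓ} with K_ℓ an odd integer and q_ℓ ≤ p_ℓ); moreover, ord(C_ℓ) = −p_ℓ (equivalently C_ℓ ≠ 0 and q_ℓ = p_ℓ) if and only if ℓ = 0 or ℓ is odd. -/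
open scoped BigOperators

/-- 2-adic valuation of a rational, with `ord 0 = ⊤`. -/
noncomputable def ord (q : ℚ) : WithTop ℤ :=
  if q = 0 then ⊤ else (padicValRat 2 q : WithTop ℤ)

/-- `p ℓ = ℓ + 1 + ord((ℓ+1)!)`. -/
def p (ℓ : ℕ) : ℕ := ℓ + 1 + padicValNat 2 (Nat.factorial (ℓ + 1))

/-- `φ̂ = X⁻¹ + Σ_{ℓ≥0} B_ℓ Xˡ` as a formal Laurent series over `ℚ`. -/
noncomputable def phiHat (B : ℕ → ℚ) : LaurentSeries ℚ :=
  HahnSeries.single (-1 : ℤ) (1 : ℚ) + HahnSeries.ofPowerSeries ℤ ℚ (PowerSeries.mk B)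

/-- `(C_ℓ)` is the formal inverse coefficient sequence of `(B_ℓ)`: for every `ℓ ≥ 0`
the coefficient of `X^0` in `φ̂^{ℓ+1} + Σ_{k=0}^{ℓ} C_k φ̂^{ℓ-k} - X⁻¹·φ̂^{ℓ}` vanishes. -/
def IsFormalInverseSeq (B C : ℕ → ℚ) : Prop :=
  ∀ ℓ : ℕ,
    (phiHat B ^ (ℓ + 1) + (∑ k ∈ Finset.range (ℓ + 1), C k • phiHat B ^ (ℓ - k))
      - HahnSeries.single (-1 : ℤ) (1 : ℚ) * phiHat B ^ ℓ).coeff 0 = 0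

/-! ### Stage 1 : from Laurent series to a power-series coefficient recursion -/

open PowerSeries

noncomputable def u (B : ℕ → ℚ) : PowerSeries ℚ := 1 + PowerSeries.X * PowerSeries.mk B

lemma phiHat_eq (B : ℕ → ℚ) :
    phiHat B = HahnSeries.single (-1 : ℤ) (1 : ℚ) * HahnSeries.ofPowerSeries ℤ ℚ (u B) := by
  rw [u, map_add, map_mul, HahnSeries.ofPowerSeries_X, mul_add, ← mul_assoc,
    HahnSeries.single_mul_single, phiHat]
  norm_num

lemma single_neg_one_pow (n : ℕ) : (HahnSeries.single (-1 : ℤ) (1 : ℚ)) ^ n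
    = HahnSeries.single (-(n:ℤ)) (1 : ℚ) := by
  induction n with
  | zero => simp [HahnSeries.single_zero_one]
  | succ k ih => rw [pow_succ, ih, HahnSeries.single_mul_single, mul_one]; congr 2; push_cast; ring

lemma phiHat_pow_coeff (B : ℕ → ℚ) (n k : ℕ) :
    (phiHat B ^ n).coeff ((k : ℤ) - n) = PowerSeries.coeff k ((u B) ^ n) := by
  rw [phiHat_eq, mul_pow, single_neg_one_pow, ← map_pow]
  have : (k : ℤ) - n = (k : ℤ) + (-(n:ℤ)) := by ring
  rw [this, HahnSeries.coeff_single_mul_add, one_mul, HahnSeries.ofPowerSeries_apply_coeff]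

noncomputable def A (B : ℕ → ℚ) (n m : ℕ) : ℚ := PowerSeries.coeff m ((u B) ^ n)

lemma A_zero (B : ℕ → ℚ) (m : ℕ) : A B 0 m = if m = 0 then 1 else 0 := by
  simp [A, PowerSeries.coeff_one]

lemma A_m_zero (B : ℕ → ℚ) (n : ℕ) : A B n 0 = 1 := by
  rw [A, PowerSeries.coeff_zero_eq_constantCoeff, map_pow]
  simp [u]

lemma A_succ (B : ℕ → ℚ) (n m : ℕ) :
    A B (n+1) m = A B n m + ∑ j ∈ Finset.range m, B j * A B n (m - 1 - j) := by
  have : (u B) ^ (n+1) = (u B)^n + PowerSeries.X * (PowerSeries.mk B * (u B)^n) := by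
    rw [pow_succ']; rw [u]; ring
  rw [A, this, map_add]
  congr 1
  cases m with
  | zero => simp
  | succ m' =>
    rw [PowerSeries.coeff_succ_X_mul, PowerSeries.coeff_mul,
      Finset.Nat.sum_antidiagonal_eq_sum_range_succ_mk]
    refine Finset.sum_congr rfl fun j hj => ?_
    simp only [Finset.mem_range] at hj
    simp only [PowerSeries.coeff_mk, A, Nat.succ_sub_one]

lemma key_relation {B C : ℕ → ℚ} (hC : IsFormalInverseSeq B C) (ℓ : ℕ) :
    A B (ℓ+1) (ℓ+1) + (∑ k ∈ Finset.range (ℓ+1), C k * A B (ℓ-k) (ℓ-k)) - A B ℓ (ℓ+1) = 0 := by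
  have h := hC ℓ
  rw [HahnSeries.coeff_sub, HahnSeries.coeff_add] at h
  have h1 : (phiHat B ^ (ℓ+1)).coeff 0 = A B (ℓ+1) (ℓ+1) := by
    have := phiHat_pow_coeff B (ℓ+1) (ℓ+1)
    simpa [A] using this
  have h2 : (∑ k ∈ Finset.range (ℓ + 1), C k • phiHat B ^ (ℓ - k)).coeff 0
      = ∑ k ∈ Finset.range (ℓ+1), C k * A B (ℓ-k) (ℓ-k) := by
    rw [show ((∑ k ∈ Finset.range (ℓ + 1), C k • phiHat B ^ (ℓ - k)).coeff 0)
      = HahnSeries.coeff.addMonoidHom (0 : ℤ)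
        (∑ k ∈ Finset.range (ℓ + 1), C k • phiHat B ^ (ℓ - k)) from rfl, map_sum]
    refine Finset.sum_congr rfl fun k hk => ?_
    show (C k • phiHat B ^ (ℓ - k)).coeff 0 = _
    rw [HahnSeries.coeff_smul, smul_eq_mul]
    congr 1
    have := phiHat_pow_coeff B (ℓ-k) (ℓ-k)
    simpa [A] using this
  have h3 : (HahnSeries.single (-1 : ℤ) (1:ℚ) * phiHat B ^ ℓ).coeff 0 = A B ℓ (ℓ+1) := by
    have e : (0:ℤ) = 1 + (-1) := by ring
    rw [e, HahnSeries.coeff_single_mul_add, one_mul]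
    have := phiHat_pow_coeff B ℓ (ℓ+1)
    have e2 : ((ℓ:ℤ) + 1) - ℓ = 1 := by ring
    rw [show ((ℓ+1 : ℕ) : ℤ) = (ℓ:ℤ)+1 by push_cast; ring, e2] at this
    exact this
  rw [h1, h2, h3] at h
  exact h

lemma C_recursion {B C : ℕ → ℚ} (hC : IsFormalInverseSeq B C) (ℓ : ℕ) :
    C ℓ = A B ℓ (ℓ+1) - A B (ℓ+1) (ℓ+1) - ∑ k ∈ Finset.range ℓ, C k * A B (ℓ-k) (ℓ-k) := by
  have h := key_relation hC ℓ
  rw [Finset.sum_range_succ] at h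
  simp only [Nat.sub_self, A_zero, if_true, mul_one] at h
  linarith

/-! ### Stage 2 : residue machinery in `ℚ_[2]` -/

noncomputable def res (x : ℚ_[2]) : ZMod 2 :=
  if h : ‖x‖ ≤ 1 then PadicInt.toZMod (⟨x, h⟩ : ℤ_[2]) else 0

lemma res_def {x : ℚ_[2]} (h : ‖x‖ ≤ 1) : res x = PadicInt.toZMod (⟨x, h⟩ : ℤ_[2]) := by
  rw [res, dif_pos h]

lemma res_add {x y : ℚ_[2]} (hx : ‖x‖ ≤ 1) (hy : ‖y‖ ≤ 1) :
    res (x + y) = res x + res y := by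
  have hxy : ‖x + y‖ ≤ 1 := le_trans (Padic.nonarchimedean x y) (max_le hx hy)
  rw [res_def hx, res_def hy, res_def hxy]
  exact map_add (M := ℤ_[2]) PadicInt.toZMod ⟨x, hx⟩ ⟨y, hy⟩

lemma res_mul {x y : ℚ_[2]} (hx : ‖x‖ ≤ 1) (hy : ‖y‖ ≤ 1) :
    res (x * y) = res x * res y := by
  have hxy : ‖x * y‖ ≤ 1 := by
    rw [norm_mul]
    exact mul_le_one₀ hx (norm_nonneg y) hy
  rw [res_def hx, res_def hy, res_def hxy]
  exact map_mul (M := ℤ_[2]) PadicInt.toZMod ⟨x, hx⟩ ⟨y, hy⟩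

lemma norm_natCast_le_one (n : ℕ) : ‖(n : ℚ_[2])‖ ≤ 1 := by
  have := PadicInt.norm_le_one (n : ℤ_[2])
  rwa [PadicInt.norm_def, PadicInt.coe_natCast] at this

lemma res_natCast (n : ℕ) : res (n : ℚ_[2]) = (n : ZMod 2) := by
  have h : ‖(n : ℚ_[2])‖ ≤ 1 := norm_natCast_le_one n
  rw [res_def h]
  have : (⟨(n : ℚ_[2]), h⟩ : ℤ_[2]) = (n : ℤ_[2]) := by ext; simp
  rw [this, map_natCast]

lemma res_one : res (1 : ℚ_[2]) = 1 := by simpa using res_natCast 1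

lemma res_zero : res (0 : ℚ_[2]) = 0 := by simpa using res_natCast 0

lemma res_neg {x : ℚ_[2]} (hx : ‖x‖ ≤ 1) : res (-x) = res x := by
  have h' : ‖(-1 : ℚ_[2])‖ ≤ 1 := by simp
  have hh : (-x) = (-1) * x := by ring
  rw [hh, res_mul h' hx]
  have : res (-1 : ℚ_[2]) = 1 := by
    rw [res_def h']
    have : (⟨(-1 : ℚ_[2]), h'⟩ : ℤ_[2]) = (-1 : ℤ_[2]) := by ext; simp
    rw [this, map_neg, map_one]
    decide
  rw [this, one_mul]

lemma res_sub {x y : ℚ_[2]} (hx : ‖x‖ ≤ 1) (hy : ‖y‖ ≤ 1) :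
    res (x - y) = res x - res y := by
  rw [sub_eq_add_neg, res_add hx (by simpa using hy), res_neg hy, CharTwo.sub_eq_add]

lemma res_ne_zero_iff {x : ℚ_[2]} (hx : ‖x‖ ≤ 1) : res x ≠ 0 ↔ ‖x‖ = 1 := by
  have key : (PadicInt.toZMod (⟨x, hx⟩ : ℤ_[2]) = 0) ↔ ¬ ‖x‖ = 1 := by
    have gen : ∀ z : ℤ_[2], PadicInt.toZMod z = 0 ↔ ¬ ‖z‖ = 1 := by
      intro z
      rw [← RingHom.mem_ker, PadicInt.ker_toZMod, IsLocalRing.mem_maximalIdeal,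
        mem_nonunits_iff, PadicInt.isUnit_iff]
    exact gen ⟨x, hx⟩
  rw [res_def hx, ne_eq, key, not_not]

lemma zmod2_cases (x : ZMod 2) : x = 0 ∨ x = 1 := by revert x; decide

lemma zmod2_sq (x : ZMod 2) : x * x = x := by revert x; decide

lemma res_of_norm_one {x : ℚ_[2]} (hx : ‖x‖ = 1) : res x = 1 := by
  have h1 : ‖x‖ ≤ 1 := le_of_eq hx
  rcases zmod2_cases (res x) with h | h
  · exact absurd h ((res_ne_zero_iff h1).mpr hx)
  · exact h

lemma norm_sum_le_one {α : Type*} (s : Finset α) (f : α → ℚ_[2])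
    (h : ∀ i ∈ s, ‖f i‖ ≤ 1) : ‖∑ i ∈ s, f i‖ ≤ 1 := by
  classical
  induction s using Finset.induction_on with
  | empty => simp
  | @insert a s' hx ih =>
    rw [Finset.sum_insert hx]
    refine le_trans (Padic.nonarchimedean _ _)
      (max_le (h a (by simp)) (ih fun i hi => h i (by simp [hi])))

lemma res_sum {α : Type*} (s : Finset α) (f : α → ℚ_[2])
    (h : ∀ i ∈ s, ‖f i‖ ≤ 1) : res (∑ i ∈ s, f i) = ∑ i ∈ s, res (f i) := by
  classical
  induction s using Finset.induction_on with
  | empty => simpa using res_zero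
  | @insert a s' hx ih =>
    rw [Finset.sum_insert hx, Finset.sum_insert hx,
      res_add (h a (by simp)) (norm_sum_le_one _ _ fun i hi => h i (by simp [hi])),
      ih fun i hi => h i (by simp [hi])]

/-! ### Stage 3 : the weight `W` and binomial coefficients -/

def W (m : ℕ) : ℕ := m + padicValNat 2 (Nat.factorial m)

lemma W_zero : W 0 = 0 := by simp [W, Nat.factorial]

lemma p_eq_W (ℓ : ℕ) : p ℓ = W (ℓ + 1) := rfl

lemma W_eq {j m : ℕ} (h : j ≤ m) :
    W j + W (m - j) + padicValNat 2 (Nat.choose m j) = W m := by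
  have key := Nat.choose_mul_factorial_mul_factorial h
  have c0 : Nat.choose m j ≠ 0 := (Nat.choose_pos h).ne'
  have h1 : padicValNat 2 (Nat.choose m j) + padicValNat 2 (Nat.factorial j)
      + padicValNat 2 (Nat.factorial (m-j)) = padicValNat 2 (Nat.factorial m) := by
    rw [← padicValNat.mul c0 (Nat.factorial_ne_zero j),
      ← padicValNat.mul (mul_ne_zero c0 (Nat.factorial_ne_zero j)) (Nat.factorial_ne_zero (m-j)),
      key]
  unfold W
  omega

lemma choose_cast_zmod {j m : ℕ} (h : j ≤ m) :
    ((Nat.choose m j : ℕ) : ZMod 2) = if padicValNat 2 (Nat.choose m j) = 0 then 1 else 0 := by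
  have c0 : Nat.choose m j ≠ 0 := (Nat.choose_pos h).ne'
  by_cases hd : 2 ∣ Nat.choose m j
  · rw [if_neg, (ZMod.natCast_eq_zero_iff _ _).mpr hd]
    have := (dvd_iff_padicValNat_ne_zero c0 (p := 2)).mp hd
    omega
  · rw [if_pos (padicValNat.eq_zero_of_not_dvd hd)]
    have hne : ((Nat.choose m j : ℕ) : ZMod 2) ≠ 0 := by
      rw [ne_eq, ZMod.natCast_eq_zero_iff]
      exact hd
    rcases zmod2_cases ((Nat.choose m j : ℕ) : ZMod 2) with h' | h'
    · exact absurd h' hne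
    · exact h'

/-! ### Stage 4 : bridge between `ord` and norms in `ℚ_[2]` -/

lemma norm_scaled (q : ℚ) (hq : q ≠ 0) (w : ℕ) :
    ‖(q : ℚ_[2]) * 2 ^ w‖ = (2:ℝ) ^ (-(padicValRat 2 q) - w) := by
  have h2 : ‖(2 : ℚ_[2]) ^ w‖ = (2:ℝ) ^ (-(w:ℤ)) := by
    rw [norm_pow]
    have : ‖(2 : ℚ_[2])‖ = (2:ℝ)⁻¹ := by
      have := @Padic.norm_p 2 ⟨by norm_num⟩
      simpa using this
    rw [this, ← zpow_natCast, inv_zpow, ← zpow_neg]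
  rw [norm_mul, h2, Padic.eq_padicNorm, padicNorm.eq_zpow_of_nonzero hq]
  push_cast
  rw [← zpow_add₀ (by norm_num : (2:ℝ) ≠ 0)]
  ring_nf

lemma ord_ge_iff (q : ℚ) (w : ℕ) :
    ((-(w:ℤ) : ℤ) : WithTop ℤ) ≤ ord q ↔ ‖(q : ℚ_[2]) * 2 ^ w‖ ≤ 1 := by
  by_cases hq : q = 0
  · simp [hq, ord, le_top]
  · rw [ord, if_neg hq, norm_scaled q hq w]
    rw [show (1:ℝ) = (2:ℝ)^(0:ℤ) by norm_num, zpow_le_zpow_iff_right₀ (by norm_num : (1:ℝ) < 2)]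
    rw [WithTop.coe_le_coe]
    omega

lemma ord_eq_iff (q : ℚ) (w : ℕ) :
    ord q = ((-(w:ℤ) : ℤ) : WithTop ℤ) ↔ ‖(q : ℚ_[2]) * 2 ^ w‖ = 1 := by
  by_cases hq : q = 0
  · simp only [hq, ord, if_pos rfl, Rat.cast_zero, zero_mul, norm_zero]
    constructor
    · intro h; exact absurd h.symm (WithTop.coe_ne_top)
    · intro h; norm_num at h
  · rw [ord, if_neg hq, norm_scaled q hq w]
    rw [show (1:ℝ) = (2:ℝ)^(0:ℤ) by norm_num]
    rw [(zpow_right_strictMono₀ (by norm_num : (1:ℝ) < 2)).injective.eq_iff]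
    rw [WithTop.coe_inj]
    omega

/-! ### Stage 5 : the main inductions -/

noncomputable def At (B : ℕ → ℚ) (n m : ℕ) : ℚ_[2] := ((A B n m : ℚ) : ℚ_[2]) * 2 ^ (W m)

noncomputable def Ct (C : ℕ → ℚ) (ℓ : ℕ) : ℚ_[2] := ((C ℓ : ℚ) : ℚ_[2]) * 2 ^ (W (ℓ+1))


noncomputable def Bt (B : ℕ → ℚ) (j : ℕ) : ℚ_[2] := ((B j : ℚ) : ℚ_[2]) * 2 ^ (W (j+1))

lemma norm_Bt {B : ℕ → ℚ} (hB : ∀ ℓ : ℕ, ord (B ℓ) = (-(p ℓ : ℤ) : WithTop ℤ)) (j : ℕ) :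
    ‖Bt B j‖ = 1 := by
  have := (ord_eq_iff (B j) (p j)).mp (hB j)
  rwa [p_eq_W] at this

lemma norm_two_pow_le (e : ℕ) : ‖(2:ℚ_[2])^e‖ ≤ 1 := by
  have := norm_natCast_le_one (2^e)
  rwa [Nat.cast_pow, Nat.cast_ofNat] at this

lemma res_two_pow (e : ℕ) : res ((2:ℚ_[2])^e) = if e = 0 then 1 else 0 := by
  have h : ((2:ℚ_[2])^e) = (((2^e : ℕ) : ℚ_[2])) := by push_cast; ring
  rw [h, res_natCast]
  cases e with
  | zero => simp
  | succ e' =>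
    rw [if_neg (Nat.succ_ne_zero e')]
    push_cast
    rw [show ((2:ZMod 2)) = 0 by decide, zero_pow (Nat.succ_ne_zero e')]

lemma At_succ (B : ℕ → ℚ) (n m : ℕ) :
    At B (n+1) m = At B n m + ∑ j ∈ Finset.range m,
      Bt B j * At B n (m-1-j) * (2:ℚ_[2]) ^ (padicValNat 2 (Nat.choose m (j+1))) := by
  have h := A_succ B n m
  have h2 : ((A B (n+1) m : ℚ) : ℚ_[2]) = ((A B n m : ℚ):ℚ_[2])
      + ∑ j ∈ Finset.range m, ((B j : ℚ):ℚ_[2]) * ((A B n (m-1-j) : ℚ):ℚ_[2]) := by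
    rw [h]; push_cast; ring
  rw [At, h2, add_mul, Finset.sum_mul]
  congr 1
  refine Finset.sum_congr rfl fun j hj => ?_
  simp only [Finset.mem_range] at hj
  have hW : W (j+1) + W (m-1-j) + padicValNat 2 (Nat.choose m (j+1)) = W m := by
    have := W_eq (show j+1 ≤ m by omega)
    rwa [show m - (j+1) = m - 1 - j by omega] at this
  rw [Bt, At, ← hW, pow_add, pow_add]
  ring

lemma PA {B : ℕ → ℚ} (hB : ∀ ℓ : ℕ, ord (B ℓ) = (-(p ℓ : ℤ) : WithTop ℤ)) :
    ∀ n m : ℕ, ‖At B n m‖ ≤ 1 ∧ res (At B n m) = (if m = 0 then 1 else (n : ZMod 2)) := by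
  intro n
  induction n with
  | zero =>
    intro m
    cases m with
    | zero =>
      have : At B 0 0 = 1 := by rw [At, A_m_zero, W_zero]; norm_num
      rw [this]
      simp [res_one]
    | succ m' =>
      have : At B 0 (m'+1) = 0 := by
        rw [At, A_zero, if_neg (Nat.succ_ne_zero m')]; norm_num
      rw [this]
      simp [res_zero]
  | succ n ih =>
    intro m
    have hterm : ∀ j ∈ Finset.range m,
        ‖Bt B j * At B n (m-1-j) * (2:ℚ_[2]) ^ (padicValNat 2 (Nat.choose m (j+1)))‖ ≤ 1 := by
      intro j hj
      rw [norm_mul, norm_mul, norm_Bt hB, one_mul]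
      exact mul_le_one₀ (ih (m-1-j)).1 (norm_nonneg _) (norm_two_pow_le _)
    have hnorm : ‖At B (n+1) m‖ ≤ 1 := by
      rw [At_succ]
      exact le_trans (Padic.nonarchimedean _ _)
        (max_le (ih m).1 (norm_sum_le_one _ _ hterm))
    refine ⟨hnorm, ?_⟩
    rw [At_succ, res_add (ih m).1 (norm_sum_le_one _ _ hterm), (ih m).2,
      res_sum _ _ hterm]
    have hres : ∀ j ∈ Finset.range m,
        res (Bt B j * At B n (m-1-j) * (2:ℚ_[2]) ^ (padicValNat 2 (Nat.choose m (j+1))))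
        = (if m-1-j = 0 then 1 else (n : ZMod 2)) * ((Nat.choose m (j+1) : ℕ) : ZMod 2) := by
      intro j hj
      simp only [Finset.mem_range] at hj
      rw [res_mul (by rw [norm_mul, norm_Bt hB, one_mul]; exact (ih (m-1-j)).1) (norm_two_pow_le _),
        res_mul (le_of_eq (norm_Bt hB j)) (ih (m-1-j)).1,
        res_of_norm_one (norm_Bt hB j), one_mul, (ih (m-1-j)).2, res_two_pow,
        choose_cast_zmod (show j+1 ≤ m by omega)]
    rw [Finset.sum_congr rfl hres]
    cases m with
    | zero => simp
    | succ m' =>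
      rw [if_neg (Nat.succ_ne_zero m'), if_neg (Nat.succ_ne_zero m')]
      rw [Finset.sum_range_succ]
      have hlast : (if m' + 1 - 1 - m' = 0 then (1:ZMod 2) else (n : ZMod 2))
          * ((Nat.choose (m'+1) (m'+1) : ℕ) : ZMod 2) = 1 := by
        simp [Nat.choose_self]
      rw [hlast]
      have hrest : ∀ j ∈ Finset.range m',
          (if m' + 1 - 1 - j = 0 then (1:ZMod 2) else (n : ZMod 2))
            * ((Nat.choose (m'+1) (j+1) : ℕ) : ZMod 2)
          = (n : ZMod 2) * ((Nat.choose (m'+1) (j+1) : ℕ) : ZMod 2) := by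
        intro j hj
        simp only [Finset.mem_range] at hj
        rw [if_neg (by omega)]
      rw [Finset.sum_congr rfl hrest, ← Finset.mul_sum, ← Nat.cast_sum]
      have hnat : 1 + ((∑ j ∈ Finset.range m', Nat.choose (m'+1) (j+1)) + 1) = 2^(m'+1) := by
        have h1 := Nat.sum_range_choose (m'+1)
        rw [Finset.sum_range_succ'] at h1
        rw [Finset.sum_range_succ] at h1
        simp only [Nat.choose_zero_right, Nat.choose_self] at h1
        omega
      have hcast : ((∑ j ∈ Finset.range m', Nat.choose (m'+1) (j+1) : ℕ) : ZMod 2) = 0 := by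
        have := congrArg (fun x : ℕ => (x : ZMod 2)) hnat
        push_cast at this ⊢
        rw [show ((2:ZMod 2)) = 0 by decide, zero_pow (Nat.succ_ne_zero m')] at this
        have h22 : (2:ZMod 2) = 0 := by decide
        linear_combination this - h22
      rw [hcast, mul_zero, zero_add]
      push_cast
      ring



lemma h22 : (2 : ZMod 2) = 0 := by decide

lemma natCast_zmod2 (k : ℕ) : (k : ZMod 2) = if Odd k then 1 else 0 := by
  have h := (ZMod.natCast_mod k 2).symm
  rcases Nat.mod_two_eq_zero_or_one k with hk | hk
  · rw [if_neg (by rw [Nat.odd_iff]; omega), h, hk, Nat.cast_zero]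
  · rw [if_pos (by rwa [Nat.odd_iff]), h, hk, Nat.cast_one]

lemma sum_aux (ℓ : ℕ) :
    ∑ k ∈ Finset.range ℓ, (ℓ-k) * Nat.choose (ℓ+1) (k+1) = (ℓ+1) * (2^ℓ - 1) := by
  have hterm : ∀ k ∈ Finset.range ℓ,
      (ℓ-k) * Nat.choose (ℓ+1) (k+1) = (ℓ+1) * Nat.choose ℓ (k+1) := by
    intro k hk
    simp only [Finset.mem_range] at hk
    have hp : Nat.choose (ℓ+1) (k+1) = Nat.choose ℓ k + Nat.choose ℓ (k+1) :=
      Nat.choose_succ_succ ℓ k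
    have hr : Nat.choose ℓ (k+1) * (k+1) = Nat.choose ℓ k * (ℓ - k) :=
      Nat.choose_succ_right_eq ℓ k
    have h2 : (k+1) + (ℓ-k) = ℓ+1 := by omega
    calc (ℓ-k) * Nat.choose (ℓ+1) (k+1)
        = Nat.choose ℓ k * (ℓ-k) + (ℓ-k) * Nat.choose ℓ (k+1) := by rw [hp]; ring
      _ = Nat.choose ℓ (k+1) * (k+1) + (ℓ-k) * Nat.choose ℓ (k+1) := by rw [hr]
      _ = Nat.choose ℓ (k+1) * ((k+1) + (ℓ-k)) := by ring
      _ = (ℓ+1) * Nat.choose ℓ (k+1) := by rw [h2]; ring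
  rw [Finset.sum_congr rfl hterm, ← Finset.mul_sum]
  congr 1
  have h1 := Nat.sum_range_choose ℓ
  rw [Finset.sum_range_succ'] at h1
  simp only [Nat.choose_zero_right] at h1
  omega

lemma comb (ℓ : ℕ) :
    (ℓ:ZMod 2) - ((ℓ+1:ℕ):ZMod 2) - ∑ k ∈ Finset.range ℓ,
      (if k = 0 ∨ Odd k then (1:ZMod 2) else 0) * ((ℓ-k : ℕ) : ZMod 2)
        * ((Nat.choose (ℓ+1) (k+1) : ℕ) : ZMod 2)
    = (if ℓ = 0 ∨ Odd ℓ then 1 else 0) := by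
  rcases Nat.eq_zero_or_pos ℓ with rfl | hℓ
  · norm_num
    decide
  · -- split ε_k = (k) + [k = 0]
    have hsplit : ∀ k ∈ Finset.range ℓ,
        (if k = 0 ∨ Odd k then (1:ZMod 2) else 0) * ((ℓ-k : ℕ) : ZMod 2)
          * ((Nat.choose (ℓ+1) (k+1) : ℕ) : ZMod 2)
        = (k:ZMod 2) * ((ℓ-k : ℕ) : ZMod 2) * ((Nat.choose (ℓ+1) (k+1) : ℕ) : ZMod 2)
          + (if k = 0 then ((ℓ-k : ℕ) : ZMod 2) * ((Nat.choose (ℓ+1) (k+1) : ℕ) : ZMod 2) else 0) := by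
      intro k _
      rcases eq_or_ne k 0 with rfl | hk0
      · simp
      · rw [if_neg hk0, natCast_zmod2 k]
        by_cases hodd : Odd k
        · rw [if_pos (Or.inr hodd), if_pos hodd]; ring
        · rw [if_neg (by tauto), if_neg hodd]; ring
    rw [Finset.sum_congr rfl hsplit, Finset.sum_add_distrib]
    -- the [k = 0] part vanishes since ℓ(ℓ+1) is even
    have hzero : ∑ k ∈ Finset.range ℓ,
        (if k = 0 then ((ℓ-k : ℕ) : ZMod 2) * ((Nat.choose (ℓ+1) (k+1) : ℕ) : ZMod 2) else 0)
        = 0 := by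
      rw [Finset.sum_ite_eq' (Finset.range ℓ) 0]
      rw [if_pos (Finset.mem_range.mpr hℓ)]
      simp only [Nat.sub_zero, Nat.zero_add, Nat.choose_one_right]
      rw [← Nat.cast_mul, (ZMod.natCast_eq_zero_iff _ _).mpr]
      exact (Nat.even_mul_succ_self ℓ).two_dvd
    rw [hzero, add_zero]
    -- main term : (k)(ℓ-k) = (ℓ+1)(ℓ-k)
    have hmain : ∀ k ∈ Finset.range ℓ,
        (k:ZMod 2) * ((ℓ-k : ℕ) : ZMod 2) * ((Nat.choose (ℓ+1) (k+1) : ℕ) : ZMod 2)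
        = ((ℓ:ZMod 2)+1) * (((ℓ-k) * Nat.choose (ℓ+1) (k+1) : ℕ) : ZMod 2) := by
      intro k hk
      simp only [Finset.mem_range] at hk
      have hcast : (k:ZMod 2) = (ℓ:ZMod 2) + ((ℓ-k : ℕ) : ZMod 2) := by
        have hn : k + (ℓ - k) = ℓ := by omega
        have := congrArg (fun x : ℕ => (x : ZMod 2)) hn
        push_cast at this
        linear_combination this - h22 * ((ℓ-k : ℕ) : ZMod 2)
      rw [hcast, Nat.cast_mul]
      have hsq := zmod2_sq ((ℓ-k : ℕ) : ZMod 2)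
      linear_combination (((Nat.choose (ℓ+1) (k+1) : ℕ) : ZMod 2)) * hsq
    rw [Finset.sum_congr rfl hmain, ← Finset.mul_sum, ← Nat.cast_sum, sum_aux]
    have hone : (((2:ℕ)^ℓ - 1 : ℕ) : ZMod 2) = 1 := by
      have hn : ((2:ℕ)^ℓ - 1) + 1 = 2^ℓ := by
        have : 0 < (2:ℕ)^ℓ := Nat.pow_pos (by norm_num)
        omega
      have := congrArg (fun x : ℕ => (x : ZMod 2)) hn
      push_cast at this
      rw [h22, zero_pow (by omega : ℓ ≠ 0)] at this
      linear_combination this - h22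
    rw [Nat.cast_mul, hone, mul_one]
    have hodd : (if ℓ = 0 ∨ Odd ℓ then (1:ZMod 2) else 0) = (ℓ : ZMod 2) := by
      rw [natCast_zmod2 ℓ]
      rcases eq_or_ne ℓ 0 with rfl | h0
      · omega
      · by_cases ho : Odd ℓ
        · rw [if_pos (Or.inr ho), if_pos ho]
        · rw [if_neg (by tauto), if_neg ho]
    rw [hodd]
    push_cast
    have hsq := zmod2_sq ((ℓ:ZMod 2) + 1)
    linear_combination -hsq - h22 - h22 * (ℓ : ZMod 2)

lemma Ct_recursion {B C : ℕ → ℚ} (hC : IsFormalInverseSeq B C) (ℓ : ℕ) :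
    Ct C ℓ = At B ℓ (ℓ+1) - At B (ℓ+1) (ℓ+1) - ∑ k ∈ Finset.range ℓ,
      Ct C k * At B (ℓ-k) (ℓ-k) * (2:ℚ_[2]) ^ (padicValNat 2 (Nat.choose (ℓ+1) (k+1))) := by
  have h := C_recursion hC ℓ
  have h2 : ((C ℓ : ℚ) : ℚ_[2]) = ((A B ℓ (ℓ+1) : ℚ):ℚ_[2]) - ((A B (ℓ+1) (ℓ+1) : ℚ):ℚ_[2])
      - ∑ k ∈ Finset.range ℓ, ((C k : ℚ):ℚ_[2]) * ((A B (ℓ-k) (ℓ-k) : ℚ):ℚ_[2]) := by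
    rw [h]; push_cast; ring
  rw [Ct, h2, sub_mul, sub_mul, Finset.sum_mul]
  congr 1
  refine Finset.sum_congr rfl fun k hk => ?_
  simp only [Finset.mem_range] at hk
  have hW : W (k+1) + W (ℓ-k) + padicValNat 2 (Nat.choose (ℓ+1) (k+1)) = W (ℓ+1) := by
    have := W_eq (show k+1 ≤ ℓ+1 by omega)
    rwa [show ℓ + 1 - (k+1) = ℓ - k by omega] at this
  rw [Ct, At, ← hW, pow_add, pow_add]
  ring

lemma PC {B C : ℕ → ℚ} (hB : ∀ ℓ : ℕ, ord (B ℓ) = (-(p ℓ : ℤ) : WithTop ℤ))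
    (hC : IsFormalInverseSeq B C) :
    ∀ ℓ : ℕ, ‖Ct C ℓ‖ ≤ 1 ∧ res (Ct C ℓ) = (if ℓ = 0 ∨ Odd ℓ then 1 else 0) := by
  intro ℓ
  induction ℓ using Nat.strong_induction_on with
  | _ ℓ ih =>
  have hterm : ∀ k ∈ Finset.range ℓ,
      ‖Ct C k * At B (ℓ-k) (ℓ-k) * (2:ℚ_[2]) ^ (padicValNat 2 (Nat.choose (ℓ+1) (k+1)))‖ ≤ 1 := by
    intro k hk
    simp only [Finset.mem_range] at hk
    rw [norm_mul, norm_mul]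
    have h1 := (ih k hk).1
    have h2 := (PA hB (ℓ-k) (ℓ-k)).1
    have h3 := norm_two_pow_le (padicValNat 2 (Nat.choose (ℓ+1) (k+1)))
    have := mul_le_one₀ h1 (norm_nonneg _) h2
    exact mul_le_one₀ this (norm_nonneg _) h3
  have hsub1 : ‖At B ℓ (ℓ+1) - At B (ℓ+1) (ℓ+1)‖ ≤ 1 := by
    rw [sub_eq_add_neg]
    refine le_trans (Padic.nonarchimedean _ _) (max_le (PA hB ℓ (ℓ+1)).1 ?_)
    rw [norm_neg]; exact (PA hB (ℓ+1) (ℓ+1)).1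
  have hnorm : ‖Ct C ℓ‖ ≤ 1 := by
    rw [Ct_recursion hC]
    rw [sub_eq_add_neg (At B ℓ (ℓ+1) - At B (ℓ+1) (ℓ+1))]
    refine le_trans (Padic.nonarchimedean _ _) (max_le hsub1 ?_)
    rw [norm_neg]
    exact norm_sum_le_one _ _ hterm
  refine ⟨hnorm, ?_⟩
  rw [Ct_recursion hC, res_sub hsub1 (norm_sum_le_one _ _ hterm),
    res_sub (PA hB ℓ (ℓ+1)).1 (PA hB (ℓ+1) (ℓ+1)).1, res_sum _ _ hterm,
    (PA hB ℓ (ℓ+1)).2, (PA hB (ℓ+1) (ℓ+1)).2]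
  have hres : ∀ k ∈ Finset.range ℓ,
      res (Ct C k * At B (ℓ-k) (ℓ-k) * (2:ℚ_[2]) ^ (padicValNat 2 (Nat.choose (ℓ+1) (k+1))))
      = (if k = 0 ∨ Odd k then (1:ZMod 2) else 0) * ((ℓ-k : ℕ) : ZMod 2)
          * ((Nat.choose (ℓ+1) (k+1) : ℕ) : ZMod 2) := by
    intro k hk
    simp only [Finset.mem_range] at hk
    rw [res_mul (by
        rw [norm_mul]
        exact mul_le_one₀ (ih k hk).1 (norm_nonneg _) (PA hB (ℓ-k) (ℓ-k)).1)
      (norm_two_pow_le _),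
      res_mul (ih k hk).1 (PA hB (ℓ-k) (ℓ-k)).1, (ih k hk).2, (PA hB (ℓ-k) (ℓ-k)).2,
      res_two_pow, choose_cast_zmod (show k+1 ≤ ℓ+1 by omega)]
    rw [if_neg (show ¬ (ℓ - k = 0) by omega)]
  rw [Finset.sum_congr rfl hres]
  rw [if_neg (Nat.succ_ne_zero ℓ)]
  have := comb ℓ
  push_cast at this ⊢
  linear_combination this

theorem laurent_coeffs_mandelbrot (B C : ℕ → ℚ)
    (hB : ∀ ℓ : ℕ, ord (B ℓ) = (-(p ℓ : ℤ) : WithTop ℤ))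
    (hC : IsFormalInverseSeq B C) :
    ∀ ℓ : ℕ, (-(p ℓ : ℤ) : WithTop ℤ) ≤ ord (C ℓ) ∧
      (ord (C ℓ) = (-(p ℓ : ℤ) : WithTop ℤ) ↔ ℓ = 0 ∨ Odd ℓ) := by
  intro ℓ
  obtain ⟨h1, h2⟩ := PC hB hC ℓ
  have hCt : Ct C ℓ = ((C ℓ : ℚ) : ℚ_[2]) * 2 ^ (p ℓ) := by rw [Ct, p_eq_W]
  constructor
  · exact (ord_ge_iff (C ℓ) (p ℓ)).mpr (by rw [← hCt]; exact h1)
  · rw [show (-(p ℓ : ℤ) : WithTop ℤ) = ((-(p ℓ : ℤ) : ℤ) : WithTop ℤ) from rfl,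
      ord_eq_iff (C ℓ) (p ℓ), ← hCt]
    constructor
    · intro hn
      by_contra hcond
      have := (res_ne_zero_iff h1).mpr hn
      rw [h2, if_neg hcond] at this
      exact this rfl
    · intro hcond
      refine (res_ne_zero_iff h1).mp ?_
      rw [h2, if_pos hcond]
      exact one_ne_zero
end

section
/- Let (B_ℓ)_{ℓ≥0} be a sequence of rational numbers with ord(B_ℓ) = −p_ℓ for every ℓ ≥ 0, and let (C_ℓ)_{ℓ≥0} be the formal inverse coefficient sequence of (B_ℓ). Then for every odd ℓ ≥ 1, C_ℓ ≠ 0 and ord(C_ℓ) = −(ℓ + 1 + ord((ℓ+1)!)). -/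
open scoped BigOperators

section OrdLemmas

lemma ord_zero : ord 0 = ⊤ := by simp [ord]

lemma ord_eq_top_iff {q : ℚ} : ord q = ⊤ ↔ q = 0 := by
  unfold ord; split <;> simp_all

lemma ord_of_ne {q : ℚ} (h : q ≠ 0) : ord q = (padicValRat 2 q : WithTop ℤ) := by
  simp [ord, h]

lemma ord_mul (x y : ℚ) : ord (x * y) = ord x + ord y := by
  by_cases hx : x = 0
  · simp [hx, ord_zero]
  by_cases hy : y = 0
  · simp [hy, ord_zero]
  rw [ord_of_ne hx, ord_of_ne hy, ord_of_ne (mul_ne_zero hx hy),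
    padicValRat.mul hx hy]
  push_cast
  rfl

lemma ord_neg (x : ℚ) : ord (-x) = ord x := by
  by_cases hx : x = 0
  · simp [hx]
  · rw [ord_of_ne hx, ord_of_ne (neg_ne_zero.2 hx), padicValRat.neg]

lemma ord_add_ge {x y : ℚ} {c : WithTop ℤ} (hx : c ≤ ord x) (hy : c ≤ ord y) :
    c ≤ ord (x + y) := by
  by_cases h0 : x + y = 0
  · simp [h0, ord_zero]
  by_cases hx0 : x = 0
  · simpa [hx0] using hy
  by_cases hy0 : y = 0
  · simpa [hy0] using hx
  rw [ord_of_ne hx0] at hx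
  rw [ord_of_ne hy0] at hy
  rw [ord_of_ne h0]
  have := padicValRat.min_le_padicValRat_add (p := 2) h0
  have hmin : c ≤ ((min (padicValRat 2 x) (padicValRat 2 y) : ℤ) : WithTop ℤ) := by
    rcases le_total (padicValRat 2 x) (padicValRat 2 y) with h | h
    · rwa [min_eq_left h]
    · rwa [min_eq_right h]
  exact hmin.trans (by exact_mod_cast this)

lemma ord_sum_ge {ι : Type*} {s : Finset ι} {f : ι → ℚ} {c : WithTop ℤ}
    (h : ∀ i ∈ s, c ≤ ord (f i)) : c ≤ ord (∑ i ∈ s, f i) := by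
  classical
  induction s using Finset.induction_on with
  | empty => simp [ord_zero]
  | insert _ _ hni ih =>
    rename_i a s
    rw [Finset.sum_insert hni]
    exact ord_add_ge (h a (Finset.mem_insert_self a s))
      (ih fun i hi => h i (Finset.mem_insert_of_mem hi))

lemma ord_add_eq_left {x y : ℚ} (hx : x ≠ 0) (h : ord x < ord y) :
    x + y ≠ 0 ∧ ord (x + y) = ord x := by
  have hne : x + y ≠ 0 := by
    intro h0
    have : y = -x := by linarith [h0]
    rw [this, ord_neg] at h
    exact lt_irrefl _ h
  refine ⟨hne, le_antisymm ?_ (ord_add_ge le_rfl h.le)⟩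
  by_contra hc
  push_neg at hc
  have hxy : x = (x + y) + (-y) := by ring
  have h2 : min (ord (x + y)) (ord y) ≤ ord x := by
    calc min (ord (x + y)) (ord y) = min (ord (x + y)) (ord (-y)) := by rw [ord_neg]
    _ ≤ ord ((x + y) + (-y)) := ord_add_ge (min_le_left _ _) (min_le_right _ _)
    _ = ord x := by rw [← hxy]
  rcases le_total (ord (x + y)) (ord y) with hh | hh
  · rw [min_eq_left hh] at h2
    exact absurd h2 (not_le.2 hc)
  · rw [min_eq_right hh] at h2
    exact absurd h2 (not_le.2 h)

lemma ord_natCast_nonneg (n : ℕ) : (0 : WithTop ℤ) ≤ ord (n : ℚ) := by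
  by_cases h : (n : ℚ) = 0
  · simp [h, ord_zero]
  rw [ord_of_ne h]
  have hn : n ≠ 0 := by exact_mod_cast fun hh => h (by simp [hh])
  rw [padicValRat.of_nat]
  exact_mod_cast Int.ofNat_nonneg _

lemma ord_two : ord 2 = (1 : WithTop ℤ) := by
  rw [ord_of_ne (by norm_num)]
  norm_cast
  simpa using padicValRat.self (p := 2) (by norm_num)

lemma ord_odd_natCast {n : ℕ} (h : Odd n) : ord (n : ℚ) = 0 := by
  have hn0 : n ≠ 0 := by rintro rfl; simp at h
  rw [ord_of_ne (by exact_mod_cast hn0), padicValRat.of_nat,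
    padicValNat.eq_zero_of_not_dvd (by
      rintro hdvd; exact (Nat.not_even_iff_odd.2 h) (even_iff_two_dvd.2 hdvd))]
  rfl

end OrdLemmas

section Factorial

open Nat

/-- valuation of factorial shorthand -/
def vf (n : ℕ) : ℕ := padicValNat 2 (n !)

lemma vf_add_le (a b : ℕ) : vf a + vf b ≤ vf (a + b) := by
  have h : (a + b).choose b * a ! * b ! = (a + b)! := Nat.add_choose_mul_factorial_mul_factorial a b
  have h2 : vf (a + b) = padicValNat 2 ((a + b).choose b) + vf a + vf b := by
    unfold vf
    rw [← h, padicValNat.mul (Nat.mul_ne_zero (Nat.choose_pos (Nat.le_add_left b a) |>.ne') (factorial_ne_zero a)) (factorial_ne_zero b),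
      padicValNat.mul (Nat.choose_pos (Nat.le_add_left b a) |>.ne') (factorial_ne_zero a)]
  omega

lemma two_dvd_centralChoose (a : ℕ) (ha : 1 ≤ a) : 2 ∣ (2 * a).choose a := by
  obtain ⟨b, rfl⟩ := Nat.exists_eq_add_of_le ha
  have h1 : 2 * (1 + b) = (2 * b + 1) + 1 := by ring
  have h2 : (2 * (1 + b)).choose (1 + b) = (2 * b + 1).choose b + (2 * b + 1).choose (b + 1) := by
    rw [h1, add_comm 1 b, Nat.choose_succ_succ']
  have h3 : (2 * b + 1).choose b = (2 * b + 1).choose (b + 1) := by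
    have := Nat.choose_symm (n := 2 * b + 1) (k := b + 1) (by omega)
    have he : 2 * b + 1 - (b + 1) = b := by omega
    rw [he] at this
    omega
  exact ⟨(2 * b + 1).choose (b + 1), by omega⟩

lemma vf_double (a : ℕ) (ha : 1 ≤ a) : 2 * vf a + 1 ≤ vf (2 * a) := by
  have h : (2 * a).choose a * a ! * a ! = (2 * a)! := by
    have := Nat.choose_mul_factorial_mul_factorial (n := 2 * a) (k := a) (by omega)
    have he : 2 * a - a = a := by omega
    rwa [he] at this
  have h2 : vf (2 * a) = padicValNat 2 ((2 * a).choose a) + vf a + vf a := by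
    unfold vf
    rw [← h, padicValNat.mul (Nat.mul_ne_zero (Nat.choose_pos (by omega) |>.ne') (factorial_ne_zero a)) (factorial_ne_zero a),
      padicValNat.mul (Nat.choose_pos (by omega) |>.ne') (factorial_ne_zero a)]
  have h3 : 1 ≤ padicValNat 2 ((2 * a).choose a) :=
    one_le_padicValNat_of_dvd (Nat.choose_pos (by omega)).ne' (two_dvd_centralChoose a ha)
  omega

end Factorial

namespace OrdCProof

open PowerSeries

variable (B : ℕ → ℚ)

noncomputable def gs : ℚ⟦X⟧ := PowerSeries.mk B

noncomputable def fs : ℚ⟦X⟧ := 1 + PowerSeries.X * gs B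

noncomputable def Df : ℚ⟦X⟧ := d⁄dX ℚ (fs B)

lemma cc_fs : constantCoeff (fs B) = 1 := by
  simp [fs]

lemma fs_mul_inv : fs B * (fs B)⁻¹ = 1 :=
  PowerSeries.mul_inv_cancel _ (by rw [cc_fs]; exact one_ne_zero)

lemma fs_pow_succ_mul_inv (k : ℕ) : fs B ^ (k + 1) * (fs B)⁻¹ = fs B ^ k := by
  rw [pow_succ, mul_assoc, fs_mul_inv, mul_one]

lemma inv_pow_mul_fs_pow {k j : ℕ} (h : k ≤ j) :
    ((fs B)⁻¹) ^ k * fs B ^ j = fs B ^ (j - k) := by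
  have hj : fs B ^ j = fs B ^ (j - k) * fs B ^ k := by
    rw [← pow_add]; congr 1; omega
  have hmi : (fs B)⁻¹ * fs B = 1 :=
    PowerSeries.inv_mul_cancel _ (by rw [cc_fs]; exact one_ne_zero)
  rw [hj, ← mul_assoc, mul_comm (((fs B)⁻¹) ^ k) (fs B ^ (j-k)), mul_assoc, ← mul_pow,
    hmi, one_pow, mul_one]

lemma deriv_pow (k : ℕ) :
    d⁄dX ℚ (fs B ^ (k + 1)) = PowerSeries.C ((k : ℚ) + 1) * (fs B ^ k * Df B) := by
  induction k with
  | zero => simp [Df]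
  | succ e ih =>
    have hl : fs B ^ (e + 2) = fs B ^ (e + 1) * fs B := by ring
    rw [hl, Derivation.leibniz, ih, smul_eq_mul, smul_eq_mul]
    have hC : (PowerSeries.C) ((e : ℚ) + 1 + 1) = PowerSeries.C ((e : ℚ) + 1) + 1 := by
      rw [map_add, map_one]
    push_cast
    rw [hC]
    unfold Df
    ring

lemma P1c (k n : ℕ) :
    ((n : ℚ) + 1) * coeff (n + 1) (fs B ^ (k + 1)) =
      ((k : ℚ) + 1) * coeff n (fs B ^ k * Df B) := by
  have h := congrArg (fun F => coeff n F) (deriv_pow B k)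
  simp only [coeff_derivative, coeff_C_mul] at h
  push_cast at h
  linear_combination h

noncomputable def Ws : ℚ⟦X⟧ := 1 - PowerSeries.X * ((fs B)⁻¹ * Df B)

lemma pow_mul_Ws (m : ℕ) :
    fs B ^ m * Ws B = fs B ^ m - PowerSeries.X * (fs B ^ m * (fs B)⁻¹ * Df B) := by
  unfold Ws; ring

lemma coeff_zero_pow_Ws (m : ℕ) : coeff 0 (fs B ^ m * Ws B) = 1 := by
  rw [coeff_zero_eq_constantCoeff_apply, map_mul, map_pow, cc_fs]
  have : constantCoeff (Ws B) = 1 := by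
    unfold Ws
    rw [map_sub, map_one, map_mul, constantCoeff_X, zero_mul, sub_zero]
  rw [this, one_pow, one_mul]

lemma coeff_diag_pow_Ws {d : ℕ} (hd : 1 ≤ d) : coeff d (fs B ^ d * Ws B) = 0 := by
  obtain ⟨e, rfl⟩ : ∃ e, d = e + 1 := ⟨d - 1, by omega⟩
  rw [pow_mul_Ws, map_sub, coeff_succ_X_mul, fs_pow_succ_mul_inv]
  have h := P1c B e e
  have hne : ((e : ℚ) + 1) ≠ 0 := by positivity
  have : coeff (e + 1) (fs B ^ (e + 1)) = coeff e (fs B ^ e * Df B) :=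
    mul_left_cancel₀ hne h
  rw [this, sub_self]

lemma QD (j : ℕ) :
    ((j : ℚ) + 1) * coeff (j + 1) (fs B ^ j) =
      (j : ℚ) * coeff j (fs B ^ j * (fs B)⁻¹ * Df B) := by
  cases j with
  | zero =>
    simp [coeff_one]
  | succ e =>
    have h := P1c B e (e + 1)
    have he : fs B ^ e * Df B = fs B ^ (e+1) * (fs B)⁻¹ * Df B := by
      rw [fs_pow_succ_mul_inv]
    rw [he] at h
    push_cast at h ⊢
    convert h using 2 <;> push_cast <;> ring

lemma coeff_g_mul_pow_Ws (j : ℕ) :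
    coeff j (gs B * (fs B ^ j * Ws B)) =
      (1 / ((j : ℚ) + 1)) * coeff j (fs B ^ j * (fs B)⁻¹ * Df B) := by
  have key : PowerSeries.X * (gs B * (fs B ^ j * Ws B)) =
      (fs B ^ (j+1) * Ws B) - (fs B ^ j * Ws B) := by
    have hXg : PowerSeries.X * gs B = fs B - 1 := by unfold fs; ring
    calc PowerSeries.X * (gs B * (fs B ^ j * Ws B))
        = (PowerSeries.X * gs B) * (fs B ^ j * Ws B) := by ring
      _ = (fs B - 1) * (fs B ^ j * Ws B) := by rw [hXg]
      _ = (fs B ^ (j+1) * Ws B) - (fs B ^ j * Ws B) := by ring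
  have h := congrArg (fun F => coeff (j + 1) F) key
  simp only [coeff_succ_X_mul, map_sub] at h
  rw [h]
  rw [pow_mul_Ws B (j+1), pow_mul_Ws B j, map_sub, map_sub, coeff_succ_X_mul,
    coeff_succ_X_mul, fs_pow_succ_mul_inv]
  have h1 : coeff (j + 1) (fs B ^ (j + 1)) = coeff j (fs B ^ j * Df B) :=
    mul_left_cancel₀ (by positivity : ((j : ℚ) + 1) ≠ 0) (P1c B j j)
  have h2 : coeff (j+1) (fs B ^ j) =
      ((j : ℚ) / ((j:ℚ) + 1)) * coeff j (fs B ^ j * (fs B)⁻¹ * Df B) := by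
    have := QD B j
    field_simp
    linarith [this]
  rw [h1, h2]
  field_simp
  ring

noncomputable def Chat : ℕ → ℚ := fun k =>
  -(1 / ((k : ℚ) + 1)) * coeff k (fs B ^ k * (fs B)⁻¹ * Df B)

noncomputable def es (j : ℕ) : ℚ⟦X⟧ :=
  gs B + ∑ k ∈ Finset.range (j + 1),
    PowerSeries.C (Chat B k) * (PowerSeries.X * (fs B)⁻¹) ^ k

lemma Xinv_pow_mul {k j : ℕ} (h : k ≤ j) :
    (PowerSeries.X * (fs B)⁻¹) ^ k * (fs B ^ j * Ws B) =
      PowerSeries.X ^ k * (fs B ^ (j - k) * Ws B) := by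
  rw [mul_pow]
  calc PowerSeries.X ^ k * ((fs B)⁻¹) ^ k * (fs B ^ j * Ws B)
      = PowerSeries.X ^ k * ((((fs B)⁻¹) ^ k * fs B ^ j) * Ws B) := by ring
    _ = PowerSeries.X ^ k * (fs B ^ (j - k) * Ws B) := by rw [inv_pow_mul_fs_pow B h]

lemma EL1 (j : ℕ) : coeff j (es B j * (fs B ^ j * Ws B)) = 0 := by
  unfold es
  rw [add_mul, Finset.sum_mul, map_add, map_sum]
  have hterm : ∀ k ∈ Finset.range (j + 1),
      coeff j (PowerSeries.C (Chat B k) * (PowerSeries.X * (fs B)⁻¹) ^ k *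
        (fs B ^ j * Ws B)) = if k = j then Chat B j else 0 := by
    intro k hk
    rw [Finset.mem_range] at hk
    have hkj : k ≤ j := by omega
    rw [mul_assoc, Xinv_pow_mul B hkj, coeff_C_mul, coeff_X_pow_mul', if_pos hkj]
    by_cases hkeq : k = j
    · subst hkeq
      rw [if_pos rfl, Nat.sub_self, coeff_zero_pow_Ws, mul_one]
    · rw [if_neg hkeq]
      have h1 : 1 ≤ j - k := by omega
      rw [coeff_diag_pow_Ws B h1, mul_zero]
  rw [Finset.sum_congr rfl hterm, Finset.sum_ite_eq' (Finset.range (j+1)) j (fun _ => Chat B j)]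
  rw [if_pos (Finset.self_mem_range_succ j), coeff_g_mul_pow_Ws]
  unfold Chat
  ring


lemma coeff_Xinv_pow_of_lt {i k : ℕ} (h : i < k) :
    coeff i ((PowerSeries.X * (fs B)⁻¹) ^ k) = 0 := by
  rw [mul_pow, coeff_X_pow_mul', if_neg (by omega)]

lemma es_stab {i j : ℕ} (h : i ≤ j) : coeff i (es B j) = coeff i (es B i) := by
  unfold es
  rw [map_add, map_add, map_sum, map_sum]
  congr 1
  refine (Finset.sum_subset (by intro x hx; simp at hx ⊢; omega) ?_).symm
  intro k hk hk2
  simp only [Finset.mem_range] at hk hk2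
  rw [coeff_C_mul, coeff_Xinv_pow_of_lt B (by omega), mul_zero]

lemma EL2 : ∀ j, coeff j (es B j) = 0 := by
  intro j
  induction j using Nat.strong_induction_on with
  | _ j ih =>
    have h := EL1 B j
    rw [coeff_mul] at h
    rw [Finset.sum_eq_single_of_mem (j, 0) (by simp) ?side] at h
    · rw [coeff_zero_pow_Ws, mul_one] at h
      exact h
    case side =>
      rintro ⟨a, b⟩ hab hne
      rw [Finset.HasAntidiagonal.mem_antidiagonal] at hab
      have ha : a < j := by
        rcases Nat.lt_or_ge a j with h' | h'
        · exact h'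
        · exfalso; apply hne
          have : a = j := by omega
          subst this
          simp; omega
      rw [es_stab B (le_of_lt ha), ih a ha, zero_mul]

lemma coeff_es_eq_zero {i j : ℕ} (h : i ≤ j) : coeff i (es B j) = 0 := by
  rw [es_stab B h]; exact EL2 B i

lemma STAR (ℓ : ℕ) :
    coeff (ℓ + 1) (fs B ^ (ℓ + 1)) +
      (∑ k ∈ Finset.range (ℓ + 1), Chat B k * coeff (ℓ - k) (fs B ^ (ℓ - k))) -
      coeff (ℓ + 1) (fs B ^ ℓ) = 0 := by
  have h0 : coeff ℓ (es B ℓ * fs B ^ ℓ) = 0 := by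
    rw [coeff_mul]
    refine Finset.sum_eq_zero ?_
    rintro ⟨a, b⟩ hab
    rw [Finset.HasAntidiagonal.mem_antidiagonal] at hab
    rw [coeff_es_eq_zero B (by omega : a ≤ ℓ), zero_mul]
  have hexp : es B ℓ * fs B ^ ℓ = gs B * fs B ^ ℓ +
      ∑ k ∈ Finset.range (ℓ + 1),
        PowerSeries.C (Chat B k) * (PowerSeries.X ^ k * fs B ^ (ℓ - k)) := by
    unfold es
    rw [add_mul, Finset.sum_mul]
    congr 1
    refine Finset.sum_congr rfl ?_
    intro k hk
    rw [Finset.mem_range] at hk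
    rw [mul_assoc, mul_pow]
    congr 1
    calc PowerSeries.X ^ k * ((fs B)⁻¹) ^ k * fs B ^ ℓ
        = PowerSeries.X ^ k * (((fs B)⁻¹) ^ k * fs B ^ ℓ) := by ring
      _ = PowerSeries.X ^ k * fs B ^ (ℓ - k) := by rw [inv_pow_mul_fs_pow B (by omega : k ≤ ℓ)]
  rw [hexp, map_add, map_sum] at h0
  have hgl : coeff ℓ (gs B * fs B ^ ℓ) =
      coeff (ℓ + 1) (fs B ^ (ℓ + 1)) - coeff (ℓ + 1) (fs B ^ ℓ) := by
    have key : PowerSeries.X * (gs B * fs B ^ ℓ) = fs B ^ (ℓ + 1) - fs B ^ ℓ := by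
      have hXg : PowerSeries.X * gs B = fs B - 1 := by unfold fs; ring
      calc PowerSeries.X * (gs B * fs B ^ ℓ) = (PowerSeries.X * gs B) * fs B ^ ℓ := by ring
        _ = (fs B - 1) * fs B ^ ℓ := by rw [hXg]
        _ = fs B ^ (ℓ + 1) - fs B ^ ℓ := by ring
    have := congrArg (fun F => coeff (ℓ + 1) F) key
    simpa only [coeff_succ_X_mul, map_sub] using this
  have hterm : ∀ k ∈ Finset.range (ℓ + 1),
      coeff ℓ (PowerSeries.C (Chat B k) * (PowerSeries.X ^ k * fs B ^ (ℓ - k))) =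
        Chat B k * coeff (ℓ - k) (fs B ^ (ℓ - k)) := by
    intro k hk
    rw [Finset.mem_range] at hk
    rw [coeff_C_mul, coeff_X_pow_mul', if_pos (by omega : k ≤ ℓ)]
  rw [Finset.sum_congr rfl hterm, hgl] at h0
  linarith [h0]

lemma one_hahn : (1 : LaurentSeries ℚ) = HahnSeries.single (0 : ℤ) (1 : ℚ) := rfl

lemma phiHat_eq : phiHat B =
    HahnSeries.single (-1 : ℤ) (1 : ℚ) * HahnSeries.ofPowerSeries ℤ ℚ (fs B) := by
  have h1 : HahnSeries.ofPowerSeries ℤ ℚ (fs B) =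
      1 + HahnSeries.single (1 : ℤ) (1 : ℚ) * HahnSeries.ofPowerSeries ℤ ℚ (gs B) := by
    unfold fs
    rw [map_add, map_one, map_mul, HahnSeries.ofPowerSeries_X]
  rw [h1, mul_add, mul_one, ← mul_assoc, HahnSeries.single_mul_single, one_mul,
    show (-1 + 1 : ℤ) = 0 by ring, ← one_hahn, one_mul]
  unfold phiHat gs
  rfl

lemma phiHat_pow (m : ℕ) : phiHat B ^ m =
    HahnSeries.single (-(m : ℤ)) (1 : ℚ) * HahnSeries.ofPowerSeries ℤ ℚ (fs B ^ m) := by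
  rw [phiHat_eq, mul_pow, HahnSeries.single_pow, one_pow, map_pow]
  congr 1
  simp

lemma coeff0_pow (m : ℕ) : (phiHat B ^ m).coeff 0 = coeff m (fs B ^ m) := by
  rw [phiHat_pow, show (0 : ℤ) = (m : ℤ) + (-(m : ℤ)) by ring,
    HahnSeries.coeff_single_mul_add, one_mul, HahnSeries.ofPowerSeries_apply_coeff]

lemma coeff0_shift (ℓ : ℕ) :
    (HahnSeries.single (-1 : ℤ) (1 : ℚ) * phiHat B ^ ℓ).coeff 0 =
      coeff (ℓ + 1) (fs B ^ ℓ) := by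
  rw [phiHat_pow, ← mul_assoc, HahnSeries.single_mul_single, one_mul]
  have h : (-1 + -(ℓ : ℤ)) = -((ℓ : ℤ) + 1) := by ring
  rw [h, show (0 : ℤ) = ((ℓ + 1 : ℕ) : ℤ) + (-((ℓ : ℤ) + 1)) by push_cast; ring,
    HahnSeries.coeff_single_mul_add, one_mul, HahnSeries.ofPowerSeries_apply_coeff]

lemma coeff0_sum {s : Finset ℕ} {F : ℕ → LaurentSeries ℚ} :
    (∑ k ∈ s, F k).coeff 0 = ∑ k ∈ s, (F k).coeff 0 :=
  map_sum (HahnSeries.coeff.addMonoidHom (0 : ℤ)) F s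

lemma isFormalInverseSeq_Chat : IsFormalInverseSeq B (Chat B) := by
  intro ℓ
  rw [HahnSeries.coeff_sub, HahnSeries.coeff_add, coeff0_pow, coeff0_shift, coeff0_sum]
  have hsum : ∀ k ∈ Finset.range (ℓ + 1),
      (Chat B k • phiHat B ^ (ℓ - k)).coeff 0 =
        Chat B k * coeff (ℓ - k) (fs B ^ (ℓ - k)) := by
    intro k _
    rw [HahnSeries.coeff_smul, coeff0_pow, smul_eq_mul]
  rw [Finset.sum_congr rfl hsum]
  exact STAR B ℓ

lemma C_eq_Chat (C : ℕ → ℚ) (hC : IsFormalInverseSeq B C) : ∀ ℓ, C ℓ = Chat B ℓ := by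
  intro ℓ
  induction ℓ using Nat.strong_induction_on with
  | _ ℓ ih =>
    have h1 := hC ℓ
    have h2 := isFormalInverseSeq_Chat B ℓ
    rw [HahnSeries.coeff_sub, HahnSeries.coeff_add, coeff0_sum] at h1 h2
    have hdiff : ∑ k ∈ Finset.range (ℓ + 1),
        ((C k • phiHat B ^ (ℓ - k)).coeff 0 - (Chat B k • phiHat B ^ (ℓ - k)).coeff 0) = 0 := by
      rw [Finset.sum_sub_distrib]
      linarith [h1, h2]
    have hterm : ∀ k, (C k • phiHat B ^ (ℓ - k)).coeff 0 - (Chat B k • phiHat B ^ (ℓ - k)).coeff 0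
        = (C k - Chat B k) * coeff (ℓ - k) (fs B ^ (ℓ - k)) := by
      intro k
      rw [HahnSeries.coeff_smul, HahnSeries.coeff_smul, coeff0_pow, smul_eq_mul, smul_eq_mul]
      ring
    simp only [hterm] at hdiff
    rw [Finset.sum_range_succ] at hdiff
    have hzero : ∀ k ∈ Finset.range ℓ,
        (C k - Chat B k) * coeff (ℓ - k) (fs B ^ (ℓ - k)) = 0 := by
      intro k hk
      rw [Finset.mem_range] at hk
      rw [ih k hk, sub_self, zero_mul]
    rw [Finset.sum_eq_zero hzero, zero_add, Nat.sub_self, pow_zero, coeff_zero_one, mul_one] at hdiff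
    linarith [hdiff]


def wI (m : ℕ) : ℤ := (m : ℤ) + (vf m : ℤ)

lemma p_eq_wI (a : ℕ) : (p a : ℤ) = wI (a + 1) := by
  unfold p wI vf; push_cast; ring

lemma wI_add_le (a b : ℕ) : wI a + wI b ≤ wI (a + b) := by
  unfold wI; have := vf_add_le a b; push_cast; omega

lemma wI_double (c : ℕ) (hc : 1 ≤ c) : 2 * wI c + 1 ≤ wI (2 * c) := by
  unfold wI; have := vf_double c hc; push_cast; omega

lemma vf_zero : vf 0 = 0 := by
  unfold vf; rw [Nat.factorial_zero, padicValNat.one]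

section WithB

variable (hB : ∀ ℓ : ℕ, ord (B ℓ) = (-(p ℓ : ℤ) : WithTop ℤ))
include hB

lemma B_ne_zero (a : ℕ) : B a ≠ 0 := by
  intro h0
  have := hB a
  rw [h0, ord_zero] at this
  exact (WithTop.top_ne_coe).elim (by exact_mod_cast this)

lemma ord_B (a : ℕ) : ord (B a) = ((-(wI (a + 1)) : ℤ) : WithTop ℤ) := by
  rw [hB a, ← p_eq_wI]
  push_cast
  rfl

lemma ord_coeff_gpow (j : ℕ) : ∀ d : ℕ,
    ((-(wI (d + j)) : ℤ) : WithTop ℤ) ≤ ord (coeff d (gs B ^ j)) := by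
  induction j with
  | zero =>
    intro d
    rw [pow_zero, coeff_one]
    by_cases hd : d = 0
    · subst hd
      rw [if_pos rfl, ord_of_ne one_ne_zero, padicValRat.one]
      simp [wI, vf_zero]
    · rw [if_neg hd, ord_zero]
      exact le_top
  | succ j ih =>
    intro d
    have hsp : gs B ^ (j + 1) = gs B * gs B ^ j := by ring
    rw [hsp, coeff_mul]
    apply ord_sum_ge
    rintro ⟨a, b⟩ hab
    rw [Finset.HasAntidiagonal.mem_antidiagonal] at hab
    have hg : coeff a (gs B) = B a := by unfold gs; rw [coeff_mk]
    rw [ord_mul, hg]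
    have hle : -(wI (d + (j + 1))) ≤ -(wI (a + 1)) + -(wI (b + j)) := by
      have h1 := wI_add_le (a + 1) (b + j)
      have h2 : a + 1 + (b + j) = d + (j + 1) := by omega
      rw [h2] at h1
      omega
    calc ((-(wI (d + (j + 1))) : ℤ) : WithTop ℤ)
        ≤ ((-(wI (a + 1)) + -(wI (b + j)) : ℤ) : WithTop ℤ) := by exact_mod_cast hle
      _ = ((-(wI (a + 1)) : ℤ) : WithTop ℤ) + ((-(wI (b + j)) : ℤ) : WithTop ℤ) := by
          push_cast; rfl
      _ ≤ ord (B a) + ord (coeff b (gs B ^ j)) :=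
          add_le_add (le_of_eq (ord_B B hB a).symm) (ih b)

lemma ord_coeff_gsq (x : ℕ) :
    ((1 - wI (x + 2) : ℤ) : WithTop ℤ) ≤ ord (coeff x (gs B ^ 2)) := by
  have hexp : coeff x (gs B ^ 2) = ∑ q ∈ Finset.HasAntidiagonal.antidiagonal x, B q.1 * B q.2 := by
    rw [pow_two, coeff_mul]
    refine Finset.sum_congr rfl ?_
    intro q _
    unfold gs
    rw [coeff_mk, coeff_mk]
  rw [hexp]
  have hordterm : ∀ q ∈ Finset.HasAntidiagonal.antidiagonal x,
      ord (B q.1 * B q.2) = ((-(wI (q.1 + 1)) - wI (q.2 + 1) : ℤ) : WithTop ℤ) := by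
    intro q _
    rw [ord_mul, ord_B B hB, ord_B B hB]
    push_cast
    rfl
  have h1 := Finset.sum_filter_add_sum_filter_not (Finset.HasAntidiagonal.antidiagonal x)
      (fun q : ℕ × ℕ => q.1 < q.2) (fun q => B q.1 * B q.2)
  have h2 : (Finset.HasAntidiagonal.antidiagonal x).filter (fun q : ℕ × ℕ => ¬ q.1 < q.2) =
      ((Finset.HasAntidiagonal.antidiagonal x).filter (fun q : ℕ × ℕ => q.2 < q.1)) ∪
      ((Finset.HasAntidiagonal.antidiagonal x).filter (fun q : ℕ × ℕ => q.1 = q.2)) := by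
    rw [← Finset.filter_or]
    apply Finset.filter_congr
    intro q _
    constructor
    · intro h; omega
    · intro h; omega
  have hdisj : Disjoint ((Finset.HasAntidiagonal.antidiagonal x).filter (fun q : ℕ × ℕ => q.2 < q.1))
      ((Finset.HasAntidiagonal.antidiagonal x).filter (fun q : ℕ × ℕ => q.1 = q.2)) := by
    rw [Finset.disjoint_left]
    intro q hq1 hq2
    rw [Finset.mem_filter] at hq1 hq2
    omega
  have hswap : ∑ q ∈ (Finset.HasAntidiagonal.antidiagonal x).filter (fun q : ℕ × ℕ => q.2 < q.1),
      B q.1 * B q.2 = ∑ q ∈ (Finset.HasAntidiagonal.antidiagonal x).filter (fun q : ℕ × ℕ => q.1 < q.2),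
      B q.1 * B q.2 := by
    apply Finset.sum_nbij' (fun q : ℕ × ℕ => Prod.swap q) (fun q : ℕ × ℕ => Prod.swap q)
    · intro q hq
      rw [Finset.mem_filter, Finset.HasAntidiagonal.mem_antidiagonal] at hq ⊢
      simp only [Prod.fst_swap, Prod.snd_swap]
      obtain ⟨h1, h2⟩ := hq
      exact ⟨by omega, by omega⟩
    · intro q hq
      rw [Finset.mem_filter, Finset.HasAntidiagonal.mem_antidiagonal] at hq ⊢
      simp only [Prod.fst_swap, Prod.snd_swap]
      obtain ⟨h1, h2⟩ := hq
      exact ⟨by omega, by omega⟩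
    · intro q _; rfl
    · intro q _; rfl
    · intro q _
      simp [mul_comm]
  rw [← h1, h2, Finset.sum_union hdisj, hswap]
  -- now: Σ_< + (Σ_< + Σ_=)
  have hA : ((-(wI (x + 2)) : ℤ) : WithTop ℤ) ≤
      ord (∑ q ∈ (Finset.HasAntidiagonal.antidiagonal x).filter (fun q : ℕ × ℕ => q.1 < q.2),
        B q.1 * B q.2) := by
    apply ord_sum_ge
    intro q hq
    rw [Finset.mem_filter] at hq
    rw [hordterm q hq.1]
    have hab : q.1 + q.2 = x := Finset.HasAntidiagonal.mem_antidiagonal.1 hq.1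
    have h := wI_add_le (q.1 + 1) (q.2 + 1)
    have he : q.1 + 1 + (q.2 + 1) = x + 2 := by omega
    rw [he] at h
    exact_mod_cast (by omega : -(wI (x + 2)) ≤ -(wI (q.1 + 1)) - wI (q.2 + 1))
  have hD : ((1 - wI (x + 2) : ℤ) : WithTop ℤ) ≤
      ord (∑ q ∈ (Finset.HasAntidiagonal.antidiagonal x).filter (fun q : ℕ × ℕ => q.1 = q.2),
        B q.1 * B q.2) := by
    apply ord_sum_ge
    intro q hq
    rw [Finset.mem_filter] at hq
    rw [hordterm q hq.1]
    have hab : q.1 + q.2 = x := Finset.HasAntidiagonal.mem_antidiagonal.1 hq.1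
    have heq : q.1 = q.2 := by simpa using hq.2
    have h := wI_double (q.1 + 1) (by omega)
    have he : 2 * (q.1 + 1) = x + 2 := by omega
    rw [he] at h
    have heq2 : wI (q.2 + 1) = wI (q.1 + 1) := by rw [heq]
    exact_mod_cast (by omega : 1 - wI (x + 2) ≤ -(wI (q.1 + 1)) - wI (q.2 + 1))
  set A := ∑ q ∈ (Finset.HasAntidiagonal.antidiagonal x).filter (fun q : ℕ × ℕ => q.1 < q.2),
    B q.1 * B q.2 with hAdef
  set D := ∑ q ∈ (Finset.HasAntidiagonal.antidiagonal x).filter (fun q : ℕ × ℕ => q.1 = q.2),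
    B q.1 * B q.2 with hDdef
  have hre : A + (A + D) = (2 : ℚ) * A + D := by ring
  rw [hre]
  apply ord_add_ge _ hD
  rw [ord_mul, ord_two]
  calc ((1 - wI (x + 2) : ℤ) : WithTop ℤ)
      = (1 : WithTop ℤ) + ((-(wI (x + 2)) : ℤ) : WithTop ℤ) := by
        rw [show (1 - wI (x + 2) : ℤ) = 1 + -(wI (x + 2)) from by ring, WithTop.coe_add]
        rfl
      _ ≤ (1 : WithTop ℤ) + ord A := add_le_add le_rfl hA

lemma ord_coeff_gpow_ge_two {k : ℕ} (hk : 2 ≤ k) (d : ℕ) :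
    ((1 - wI (d + k) : ℤ) : WithTop ℤ) ≤ ord (coeff d (gs B ^ k)) := by
  obtain ⟨k', rfl⟩ : ∃ k', k = k' + 2 := ⟨k - 2, by omega⟩
  have hsp : gs B ^ (k' + 2) = gs B ^ 2 * gs B ^ k' := by ring
  rw [hsp, coeff_mul]
  apply ord_sum_ge
  rintro ⟨a, b⟩ hab
  rw [Finset.HasAntidiagonal.mem_antidiagonal] at hab
  rw [ord_mul]
  have h1 := wI_add_le (a + 2) (b + k')
  have he : a + 2 + (b + k') = d + (k' + 2) := by omega
  rw [he] at h1
  calc ((1 - wI (d + (k' + 2)) : ℤ) : WithTop ℤ)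
      ≤ ((1 - wI (a + 2) + -(wI (b + k')) : ℤ) : WithTop ℤ) := by
        exact_mod_cast (by omega : 1 - wI (d + (k' + 2)) ≤ 1 - wI (a + 2) + -(wI (b + k')))
    _ = ((1 - wI (a + 2) : ℤ) : WithTop ℤ) + ((-(wI (b + k')) : ℤ) : WithTop ℤ) := by
        push_cast; rfl
    _ ≤ ord (coeff a (gs B ^ 2)) + ord (coeff b (gs B ^ k')) :=
        add_le_add (ord_coeff_gsq B hB a) (ord_coeff_gpow B hB k' b)

end WithB

lemma fs_pow_expand (ℓ : ℕ) :
    coeff (ℓ + 1) (fs B ^ ℓ) = ∑ k ∈ Finset.range (ℓ + 1),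
      (Nat.choose ℓ k : ℚ) * coeff (ℓ + 1 - k) (gs B ^ k) := by
  have hfs : fs B = PowerSeries.X * gs B + 1 := by unfold fs; ring
  rw [hfs, add_pow, map_sum]
  refine Finset.sum_congr rfl ?_
  intro k hk
  rw [Finset.mem_range] at hk
  rw [one_pow, mul_one, ← map_natCast (PowerSeries.C) (Nat.choose ℓ k), mul_comm,
    coeff_C_mul, mul_pow, coeff_X_pow_mul', if_pos (by omega : k ≤ ℓ + 1)]


end OrdCProof

theorem ord_C_odd (B C : ℕ → ℚ)
    (hB : ∀ ℓ : ℕ, ord (B ℓ) = (-(p ℓ : ℤ) : WithTop ℤ))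
    (hC : IsFormalInverseSeq B C) :
    ∀ ℓ : ℕ, Odd ℓ → C ℓ ≠ 0 ∧
      ord (C ℓ) = (-((ℓ : ℤ) + 1 + (padicValNat 2 (Nat.factorial (ℓ + 1)) : ℤ)) : WithTop ℤ) := by
  intro ℓ hodd
  obtain ⟨t, ht⟩ := hodd
  have hl1 : 1 ≤ ℓ := by omega
  have hlQ : (ℓ : ℚ) ≠ 0 := Nat.cast_ne_zero.mpr (by omega)
  have hCeq : C ℓ = OrdCProof.Chat B ℓ := OrdCProof.C_eq_Chat B C hC ℓ
  have hne1 : ((ℓ : ℚ) + 1) ≠ 0 := by positivity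
  have halt : OrdCProof.Chat B ℓ =
      -(1 / (ℓ : ℚ)) * PowerSeries.coeff (ℓ + 1) (OrdCProof.fs B ^ ℓ) := by
    have hQD := OrdCProof.QD B ℓ
    unfold OrdCProof.Chat
    field_simp
    linear_combination hQD
  set Y := PowerSeries.coeff (ℓ + 1) (OrdCProof.fs B ^ ℓ) with hYdef
  set Rres := ∑ k ∈ Finset.Ico 2 (ℓ + 1), (Nat.choose ℓ k : ℚ) *
      PowerSeries.coeff (ℓ + 1 - k) (OrdCProof.gs B ^ k) with hRdef
  have hY : Y = (ℓ : ℚ) * B ℓ + Rres := by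
    rw [hYdef, OrdCProof.fs_pow_expand, Finset.range_eq_Ico,
      ← Finset.sum_Ico_consecutive _ (by omega : (0:ℕ) ≤ 2) (by omega : 2 ≤ ℓ + 1),
      show Finset.Ico 0 2 = Finset.range 2 from (Finset.range_eq_Ico 2).symm,
      Finset.sum_range_succ, Finset.sum_range_one]
    have ht0 : (Nat.choose ℓ 0 : ℚ) * PowerSeries.coeff (ℓ + 1 - 0) (OrdCProof.gs B ^ 0) = 0 := by
      rw [pow_zero, PowerSeries.coeff_one, if_neg (by omega : ¬ ℓ + 1 - 0 = 0), mul_zero]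
    have ht1 : (Nat.choose ℓ 1 : ℚ) * PowerSeries.coeff (ℓ + 1 - 1) (OrdCProof.gs B ^ 1) =
        (ℓ : ℚ) * B ℓ := by
      rw [pow_one, Nat.choose_one_right, show ℓ + 1 - 1 = ℓ from by omega]
      unfold OrdCProof.gs
      rw [PowerSeries.coeff_mk]
    rw [ht0, ht1, zero_add]
  have hordR : ((1 - OrdCProof.wI (ℓ + 1) : ℤ) : WithTop ℤ) ≤ ord Rres := by
    rw [hRdef]
    apply ord_sum_ge
    intro k hk
    rw [Finset.mem_Ico] at hk
    rw [ord_mul]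
    have hb := OrdCProof.ord_coeff_gpow_ge_two B hB (hk.1) (ℓ + 1 - k)
    rw [show ℓ + 1 - k + k = ℓ + 1 from by omega] at hb
    calc ((1 - OrdCProof.wI (ℓ + 1) : ℤ) : WithTop ℤ)
        = 0 + ((1 - OrdCProof.wI (ℓ + 1) : ℤ) : WithTop ℤ) := (zero_add _).symm
      _ ≤ ord ((Nat.choose ℓ k : ℚ)) + ord (PowerSeries.coeff (ℓ + 1 - k) (OrdCProof.gs B ^ k)) :=
          add_le_add (ord_natCast_nonneg _) hb
  have hCval : C ℓ = -(B ℓ) + (-(1 / (ℓ : ℚ)) * Rres) := by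
    rw [hCeq, halt, hY]
    field_simp
    ring
  have hordfrac : ord (-(1 / (ℓ : ℚ)) * Rres) = ord Rres := by
    rw [ord_mul, ord_neg]
    have h0 : ord ((1 / (ℓ : ℚ)) * (ℓ : ℚ)) = ord (1 / (ℓ : ℚ)) + ord ((ℓ : ℚ)) := ord_mul _ _
    rw [one_div_mul_cancel hlQ, ord_odd_natCast ⟨t, ht⟩, add_zero] at h0
    have hord1 : ord (1 : ℚ) = 0 := by
      rw [ord_of_ne one_ne_zero, padicValRat.one]
      rfl
    rw [hord1] at h0
    rw [← h0, zero_add]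
  have hstrict : ord (-(B ℓ)) < ord (-(1 / (ℓ : ℚ)) * Rres) := by
    rw [ord_neg, hB ℓ, hordfrac]
    refine lt_of_lt_of_le ?_ hordR
    have hplt : (-(p ℓ : ℤ)) < 1 - OrdCProof.wI (ℓ + 1) := by
      rw [← OrdCProof.p_eq_wI]
      omega
    calc (-(p ℓ : ℤ) : WithTop ℤ) = (((-(p ℓ : ℤ)) : ℤ) : WithTop ℤ) := by push_cast; rfl
      _ < ((1 - OrdCProof.wI (ℓ + 1) : ℤ) : WithTop ℤ) := by exact_mod_cast hplt
  obtain ⟨hne0, heqq⟩ := ord_add_eq_left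
    (neg_ne_zero.mpr (OrdCProof.B_ne_zero B hB ℓ)) hstrict
  rw [hCval]
  refine ⟨hne0, ?_⟩
  rw [heqq, ord_neg, hB ℓ]
  have harg : (p ℓ : ℤ) = ((ℓ : ℤ) + 1 + (padicValNat 2 (Nat.factorial (ℓ + 1)) : ℤ)) := by
    unfold p
    push_cast
    ring
  rw [harg]
  push_cast
  rfl
end

section
/- Let (B_ℓ)_{ℓ≥0} be a sequence of rational numbers with ord(B_ℓ) = −p_ℓ for every ℓ ≥ 0. Then for every k ≥ 1, ord(P_k) ≥ ord(B_k) = −p_k, and equality holds if and only if k is odd. -/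
open scoped BigOperators

/-- `P_k = Σ_{j=1}^k binom(k,j) Σ_{(i_1,…,i_j): Σ_t (i_t+1)=k+1} B_{i_1}⋯B_{i_j}`. -/
noncomputable def P (B : ℕ → ℚ) (k : ℕ) : ℚ :=
  ∑ j ∈ Finset.Icc 1 k, (k.choose j : ℚ) *
    ∑ v ∈ Finset.Nat.antidiagonalTuple j (k + 1 - j), ∏ t, B (v t)

open Finset Nat

lemma val_le_of_dvd {a b : ℕ} (hb : b ≠ 0) (h : a ∣ b) :
    padicValNat 2 a ≤ padicValNat 2 b := by
  have ha : a ≠ 0 := by rintro rfl; exact hb (zero_dvd_iff.mp h)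
  have h2 := (Nat.factorization_le_iff_dvd ha hb).mpr h
  have h3 := Finsupp.le_def.mp h2 2
  rwa [Nat.factorization_def _ Nat.prime_two, Nat.factorization_def _ Nat.prime_two] at h3

lemma valNat_prod {ι : Type*} (s : Finset ι) (f : ι → ℕ) (h : ∀ i ∈ s, f i ≠ 0) :
    padicValNat 2 (∏ i ∈ s, f i) = ∑ i ∈ s, padicValNat 2 (f i) := by
  rw [← Nat.factorization_def _ Nat.prime_two, Nat.factorization_prod h,
    Finsupp.finset_sum_apply]
  exact Finset.sum_congr rfl fun i _ => (Nat.factorization_def _ Nat.prime_two).symm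

lemma valRat_prod {ι : Type*} (s : Finset ι) (f : ι → ℚ) (h : ∀ i ∈ s, f i ≠ 0) :
    padicValRat 2 (∏ i ∈ s, f i) = ∑ i ∈ s, padicValRat 2 (f i) := by
  classical
  induction s using Finset.cons_induction with
  | empty => simp
  | cons a s ha ih =>
    rw [Finset.prod_cons, Finset.sum_cons,
      padicValRat.mul (h a (Finset.mem_cons_self a s))
        (Finset.prod_ne_zero_iff.mpr fun i hi => h i (Finset.mem_cons_of_mem hi)),
      ih (fun i hi => h i (Finset.mem_cons_of_mem hi))]

def Ple (m : ℤ) (x : ℚ) : Prop := x = 0 ∨ m ≤ padicValRat 2 x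

lemma ple_add {m : ℤ} {x y : ℚ} (hx : Ple m x) (hy : Ple m y) : Ple m (x + y) := by
  rcases hx with rfl | hx
  · simpa using hy
  rcases hy with rfl | hy
  · rw [add_zero]; exact Or.inr hx
  by_cases hxy : x + y = 0
  · exact Or.inl hxy
  · exact Or.inr (le_trans (le_min hx hy) (padicValRat.min_le_padicValRat_add hxy))

lemma ple_sum {ι : Type*} (s : Finset ι) (f : ι → ℚ) (m : ℤ)
    (h : ∀ i ∈ s, Ple m (f i)) : Ple m (∑ i ∈ s, f i) := by
  classical
  induction s using Finset.cons_induction with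
  | empty => exact Or.inl (by simp)
  | cons a s ha ih =>
    rw [Finset.sum_cons]
    exact ple_add (h a (Finset.mem_cons_self a s)) (ih fun i hi => h i (Finset.mem_cons_of_mem hi))

lemma ple_nat_mul {m : ℤ} (c : ℕ) {x : ℚ} (hx : Ple m x) : Ple m ((c : ℚ) * x) := by
  rcases hx with rfl | hx
  · exact Or.inl (by simp)
  rcases eq_or_ne (c : ℚ) 0 with hc | hc
  · exact Or.inl (by simp [hc])
  rcases eq_or_ne x 0 with rfl | hx0
  · exact Or.inl (by simp)
  refine Or.inr ?_
  rw [padicValRat.mul hc hx0]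
  have h0 : (0:ℤ) ≤ padicValRat 2 (c : ℚ) := zero_le_padicValRat_of_nat c
  omega

lemma ple_two_mul {m : ℤ} {x : ℚ} (hx : Ple m x) : Ple (m + 1) (2 * x) := by
  rcases hx with rfl | hx
  · exact Or.inl (by simp)
  rcases eq_or_ne x 0 with rfl | hx0
  · exact Or.inl (by simp)
  refine Or.inr ?_
  rw [padicValRat.mul two_ne_zero hx0]
  have h2 : padicValRat 2 (2 : ℚ) = 1 := by
    have := padicValRat.self (p := 2) one_lt_two
    simpa using this
  omega


lemma sum_succ_eq {k j : ℕ} (hjk : j ≤ k) (v : Fin j → ℕ)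
    (hv : ∑ t, v t = k + 1 - j) : ∑ t, (v t + 1) = k + 1 := by
  rw [Finset.sum_add_distrib, hv]
  simp
  omega

lemma sum_p_le {k j : ℕ} (hjk : j ≤ k) (v : Fin j → ℕ)
    (hv : ∑ t, v t = k + 1 - j) : ∑ t, p (v t) ≤ p k := by
  have hsum := sum_succ_eq hjk v hv
  have hdvd : (∏ t, (v t + 1)!) ∣ (k + 1)! := by
    have := Nat.prod_factorial_dvd_factorial_sum Finset.univ (fun t => v t + 1)
    rwa [hsum] at this
  have hval : ∑ t, padicValNat 2 (v t + 1)! ≤ padicValNat 2 (k + 1)! := by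
    rw [← valNat_prod _ _ (fun i _ => Nat.factorial_ne_zero _)]
    exact val_le_of_dvd (Nat.factorial_ne_zero _) hdvd
  have : ∑ t, p (v t) = (∑ t, (v t + 1)) + ∑ t, padicValNat 2 (v t + 1)! := by
    unfold p; rw [← Finset.sum_add_distrib]
  rw [this, hsum]
  unfold p
  omega

lemma sum_p_lt {k n : ℕ} (v : Fin (n + 2) → ℕ)
    (hjk : n + 2 ≤ k) (hv : ∑ t, v t = k + 1 - (n + 2)) (h01 : v 0 = v 1) :
    ∑ t, p (v t) + 1 ≤ p k := by
  have hsum := sum_succ_eq hjk v hv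
  set a := v 0 with ha
  have hsum2 : (2 * a + 2) + ∑ t : Fin n, (v t.succ.succ + 1) = k + 1 := by
    rw [Fin.sum_univ_succ, Fin.sum_univ_succ] at hsum
    simp only [Fin.succ_zero_eq_one] at hsum
    rw [← h01] at hsum
    omega
  have hprod : (∏ t, (v t + 1)!) = (a+1)! * ((a+1)! * ∏ t : Fin n, (v t.succ.succ + 1)!) := by
    rw [Fin.prod_univ_succ, Fin.prod_univ_succ]
    simp only [Fin.succ_zero_eq_one, ← h01]
    rfl
  have h2dvd : 2 * ((a+1)! * (a+1)!) ∣ (2*a+2)! := by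
    have hc : (2*a+2).choose (a+1) * ((a+1)! * (a+1)!) = (2*a+2)! := by
      have h0 := Nat.choose_mul_factorial_mul_factorial (show a+1 ≤ 2*a+2 by omega)
      rw [show 2*a+2 - (a+1) = a+1 by omega] at h0
      rw [← h0]; ring
    have heven : 2 ∣ (2*a+2).choose (a+1) := by
      rw [show 2*a+2 = (2*a+1)+1 by omega, Nat.choose_succ_succ]
      have h2 : (2*a+1).choose (a+1) = (2*a+1).choose a := by
        have := Nat.choose_symm (show a ≤ 2*a+1 by omega)
        rwa [show 2*a+1-a = a+1 by omega] at this
      simp only [Nat.succ_eq_add_one]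
      omega
    calc 2 * ((a+1)! * (a+1)!) ∣ (2*a+2).choose (a+1) * ((a+1)! * (a+1)!) :=
          mul_dvd_mul_right heven _
      _ = (2*a+2)! := hc
  have hmerge : (2*a+2)! * ∏ t : Fin n, (v t.succ.succ + 1)! ∣ (k+1)! := by
    have h0 := Nat.prod_factorial_dvd_factorial_sum Finset.univ
      (Fin.cons (2*a+2) (fun t : Fin n => v t.succ.succ + 1) : Fin (n+1) → ℕ)
    rw [Fin.prod_univ_succ, Fin.sum_univ_succ] at h0
    simp only [Fin.cons_zero, Fin.cons_succ] at h0
    rwa [hsum2] at h0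
  have hdvd : 2 * ∏ t, (v t + 1)! ∣ (k+1)! := by
    calc 2 * ∏ t, (v t + 1)!
        = (2 * ((a+1)! * (a+1)!)) * ∏ t : Fin n, (v t.succ.succ + 1)! := by rw [hprod]; ring
      _ ∣ (2*a+2)! * ∏ t : Fin n, (v t.succ.succ + 1)! := mul_dvd_mul_right h2dvd _
      _ ∣ (k+1)! := hmerge
  have hval : 1 + ∑ t, padicValNat 2 (v t + 1)! ≤ padicValNat 2 (k + 1)! := by
    have h1 := val_le_of_dvd (Nat.factorial_ne_zero _) hdvd
    rw [padicValNat.mul two_ne_zero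
        (Finset.prod_ne_zero_iff.mpr fun i _ => Nat.factorial_ne_zero _),
      padicValNat_self, valNat_prod _ _ (fun i _ => Nat.factorial_ne_zero _)] at h1
    exact h1
  have : ∑ t, p (v t) = (∑ t, (v t + 1)) + ∑ t, padicValNat 2 (v t + 1)! := by
    unfold p; rw [← Finset.sum_add_distrib]
  rw [this, hsum]
  unfold p
  omega

lemma le_ord_iff (m' : ℤ) (x : ℚ) : ((m' : WithTop ℤ) ≤ ord x ↔ Ple m' x) := by
  unfold ord Ple
  split_ifs with h
  · simp [h]
  · simp [h, WithTop.coe_le_coe]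

theorem ord_P (B : ℕ → ℚ)
    (hB : ∀ ℓ : ℕ, ord (B ℓ) = (-(p ℓ : ℤ) : WithTop ℤ)) :
    ∀ k : ℕ, 1 ≤ k →
      ord (B k) ≤ ord (P B k) ∧
      ord (B k) = (-(p k : ℤ) : WithTop ℤ) ∧
      (ord (P B k) = ord (B k) ↔ Odd k) := by
  classical
  have hBne : ∀ ℓ, B ℓ ≠ 0 := by
    intro ℓ h
    have h1 := hB ℓ
    rw [ord, if_pos h] at h1
    exact (WithTop.top_ne_coe (a := (-(p ℓ : ℤ)))) h1
  have hBval : ∀ ℓ, padicValRat 2 (B ℓ) = -(p ℓ : ℤ) := by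
    intro ℓ
    have h1 := hB ℓ
    rw [ord, if_neg (hBne ℓ)] at h1
    exact WithTop.coe_eq_coe.mp h1
  have hvprod : ∀ (j : ℕ) (v : Fin j → ℕ),
      padicValRat 2 (∏ t, B (v t)) = -((∑ t, p (v t) : ℕ) : ℤ) := by
    intro j v
    rw [valRat_prod _ _ (fun i _ => hBne _)]
    calc ∑ t, padicValRat 2 (B (v t)) = ∑ t, -((p (v t) : ℤ)) :=
          Finset.sum_congr rfl fun t _ => hBval _
      _ = -((∑ t, p (v t) : ℕ) : ℤ) := by push_cast; rw [Finset.sum_neg_distrib]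
  intro k hk
  set m : ℤ := -(p k : ℤ) with hm
  -- part 1
  have key1 : ∀ j ∈ Finset.Icc 1 k, ∀ v ∈ Finset.Nat.antidiagonalTuple j (k+1-j),
      Ple m (∏ t, B (v t)) := by
    intro j hj v hv
    rw [Finset.mem_Icc] at hj
    rw [Finset.Nat.mem_antidiagonalTuple] at hv
    right
    rw [hvprod j v]
    have := sum_p_le hj.2 v hv
    omega
  have hP1 : Ple m (P B k) := by
    rw [P]
    exact ple_sum _ _ _ fun j hj =>
      ple_nat_mul _ (ple_sum _ _ _ (fun v hv => key1 j hj v hv))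
  -- splitting of P
  set R : ℚ := ∑ j ∈ Finset.Ioc 1 k,
      ((k.choose j : ℚ) * ∑ v ∈ Finset.Nat.antidiagonalTuple j (k+1-j), ∏ t, B (v t)) with hRdef
  have hsplit : P B k = (k : ℚ) * B k + R := by
    rw [P, Finset.Icc_eq_cons_Ioc hk, Finset.sum_cons]
    congr 1
    rw [Nat.choose_one_right, show k + 1 - 1 = k from rfl,
      Finset.Nat.antidiagonalTuple_one, Finset.sum_singleton]
    congr 1
    simp
  -- remainder bound
  have hR : Ple (m + 1) R := by
    apply ple_sum
    intro j hj
    rw [Finset.mem_Ioc] at hj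
    apply ple_nat_mul
    obtain ⟨n, rfl⟩ : ∃ n, j = n + 2 := ⟨j - 2, by omega⟩
    set A := Finset.Nat.antidiagonalTuple (n+2) (k+1-(n+2)) with hA
    rw [← Finset.sum_filter_add_sum_filter_not A (fun v => v 0 = v 1)]
    apply ple_add
    · apply ple_sum
      intro v hv
      rw [Finset.mem_filter, hA, Finset.Nat.mem_antidiagonalTuple] at hv
      right
      rw [hvprod]
      have := sum_p_lt v (by omega) hv.1 hv.2
      omega
    · have e1 : A.filter (fun v => ¬ v 0 = v 1)
          = (A.filter (fun v => v 0 < v 1)) ∪ (A.filter (fun v => v 1 < v 0)) := by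
        rw [← Finset.filter_or]
        exact Finset.filter_congr fun v _ => by omega
      have hdisj : Disjoint (A.filter (fun v => v 0 < v 1)) (A.filter (fun v => v 1 < v 0)) := by
        rw [Finset.disjoint_left]
        intro v h1 h2
        rw [Finset.mem_filter] at h1 h2
        omega
      have e2 : (∑ v ∈ A.filter (fun v => v 1 < v 0), ∏ t, B (v t))
          = ∑ v ∈ A.filter (fun v => v 0 < v 1), ∏ t, B (v t) := by
        apply Finset.sum_nbij' (fun v => v ∘ Equiv.swap 0 1) (fun v => v ∘ Equiv.swap 0 1)
        · intro v hv
          rw [Finset.mem_filter, hA, Finset.Nat.mem_antidiagonalTuple] at hv ⊢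
          refine ⟨?_, ?_⟩
          · rw [show (∑ t, (v ∘ Equiv.swap 0 1) t) = ∑ t, v t from
              Equiv.sum_comp (Equiv.swap 0 1) v]
            exact hv.1
          · simpa [Function.comp, Equiv.swap_apply_left, Equiv.swap_apply_right] using hv.2
        · intro v hv
          rw [Finset.mem_filter, hA, Finset.Nat.mem_antidiagonalTuple] at hv ⊢
          refine ⟨?_, ?_⟩
          · rw [show (∑ t, (v ∘ Equiv.swap 0 1) t) = ∑ t, v t from
              Equiv.sum_comp (Equiv.swap 0 1) v]
            exact hv.1
          · simpa [Function.comp, Equiv.swap_apply_left, Equiv.swap_apply_right] using hv.2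
        · intro v _; funext t; simp [Function.comp, Equiv.swap_apply_self]
        · intro v _; funext t; simp [Function.comp, Equiv.swap_apply_self]
        · intro v _
          exact (Equiv.prod_comp (Equiv.swap 0 1) (fun i => B (v i))).symm
      rw [e1, Finset.sum_union hdisj, e2, ← two_mul]
      apply ple_two_mul
      apply ple_sum
      intro v hv
      rw [Finset.mem_filter, hA, Finset.Nat.mem_antidiagonalTuple] at hv
      right
      rw [hvprod]
      have := sum_p_le (show n + 2 ≤ k by omega) v hv.1
      omega
  -- value of the j = 1 term
  have hkne : (k : ℚ) ≠ 0 := Nat.cast_ne_zero.mpr (by omega)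
  have hkB0 : (k : ℚ) * B k ≠ 0 := mul_ne_zero hkne (hBne k)
  have hkB : padicValRat 2 ((k : ℚ) * B k) = (padicValNat 2 k : ℤ) + m := by
    rw [padicValRat.mul hkne (hBne k), padicValRat.of_nat, hBval k]
  refine ⟨?_, hB k, ?_⟩
  · rw [hB k]
    exact (le_ord_iff m _).mpr hP1
  · rw [hB k]
    constructor
    · -- equality implies odd
      intro hord
      by_contra hodd
      have hkeven : 2 ∣ k := by
        rcases Nat.even_or_odd k with he | ho
        · exact he.two_dvd
        · exact absurd ho hodd
      have hval1 : 1 ≤ padicValNat 2 k := one_le_padicValNat_of_dvd (by omega) hkeven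
      have hP2 : Ple (m + 1) (P B k) := by
        rw [hsplit]
        refine ple_add (Or.inr ?_) hR
        rw [hkB]
        have h1 : (1:ℤ) ≤ (padicValNat 2 k : ℤ) := by exact_mod_cast hval1
        linarith
      have := (le_ord_iff (m+1) _).mpr hP2
      rw [hord] at this
      have := WithTop.coe_le_coe.mp this
      linarith
    · -- odd implies equality
      intro hodd
      have hval0 : padicValNat 2 k = 0 := padicValNat.eq_zero_of_not_dvd (by
        rw [Nat.odd_iff] at hodd; omega)
      have hkB' : padicValRat 2 ((k : ℚ) * B k) = m := by rw [hkB, hval0]; simp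
      by_cases hR0 : R = 0
      · rw [ord, hsplit, hR0, add_zero, if_neg hkB0, hkB']
        rfl
      · have hRv : m + 1 ≤ padicValRat 2 R := hR.resolve_left hR0
        have hPne : P B k ≠ 0 := by
          intro h0
          rw [hsplit] at h0
          have hkBR : (k : ℚ) * B k = -R := by linarith
          have := congrArg (padicValRat 2) hkBR
          rw [hkB', padicValRat.neg] at this
          omega
        have hvalP : padicValRat 2 (P B k) = m := by
          rw [hsplit]
          rw [padicValRat.add_eq_of_lt (p := 2) (by rw [← hsplit]; exact hPne) hkB0 hR0
            (by rw [hkB']; omega)]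
          exact hkB'
        rw [ord, if_neg hPne, hvalP]
        rfl
end

section
/- Let (B_ℓ)_{ℓ≥0} be a sequence of rational numbers with ord(B_ℓ) = −p_ℓ for every ℓ ≥ 0. Then for every ℓ ≥ 1, ord(M_{ℓ+1} − P_ℓ) = −p_ℓ; in particular M_{ℓ+1} ≠ P_ℓ. -/
open scoped BigOperators

/-- `M_k = Σ_{j=1}^k binom(k,j) Σ_{(i_1,…,i_j): Σ_t (i_t+1)=k} B_{i_1}⋯B_{i_j}`.
(A tuple `(i_1,…,i_j)` of nonnegative integers satisfies `Σ_t (i_t+1) = k` iff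
`Σ_t i_t = k - j`; here `j ≤ k` so natural subtraction is exact.) -/
noncomputable def M (B : ℕ → ℚ) (k : ℕ) : ℚ :=
  ∑ j ∈ Finset.Icc 1 k, (k.choose j : ℚ) *
    ∑ v ∈ Finset.Nat.antidiagonalTuple j (k - j), ∏ t, B (v t)

namespace OrdMSubP

open Finset

/-! ### Arithmetic lemmas about 2-adic valuations of factorials -/

lemma e_eq (a b : ℕ) : padicValNat 2 (a+b).factorial
    = padicValNat 2 ((a+b).choose b) + padicValNat 2 a.factorial + padicValNat 2 b.factorial := by
  conv_lhs => rw [← Nat.add_choose_mul_factorial_mul_factorial a b]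
  rw [padicValNat.mul (Nat.mul_pos (Nat.choose_pos (Nat.le_add_left b a)) a.factorial_pos).ne'
        b.factorial_ne_zero,
      padicValNat.mul (Nat.choose_pos (Nat.le_add_left b a)).ne' a.factorial_ne_zero]

lemma e_add_le (a b : ℕ) : padicValNat 2 a.factorial + padicValNat 2 b.factorial
    ≤ padicValNat 2 (a+b).factorial := by
  rw [e_eq a b]; omega

lemma e_two_mul {a : ℕ} (ha : 1 ≤ a) :
    padicValNat 2 a.factorial + padicValNat 2 a.factorial + 1 ≤ padicValNat 2 (a+a).factorial := by
  rw [e_eq a a]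
  have h1 : (a+a).choose a = a.centralBinom := by rw [Nat.centralBinom]; ring_nf
  have h2 : 1 ≤ padicValNat 2 ((a+a).choose a) := by
    rw [h1]
    exact one_le_padicValNat_of_dvd a.centralBinom_pos.ne' (Nat.two_dvd_centralBinom_of_one_le ha)
  omega

lemma e_sum_le {ι : Type*} (s : Finset ι) (f : ι → ℕ) :
    ∑ i ∈ s, padicValNat 2 (f i).factorial ≤ padicValNat 2 (∑ i ∈ s, f i).factorial := by
  induction s using Finset.cons_induction with
  | empty => simp
  | cons a s ha ih =>
      rw [Finset.sum_cons, Finset.sum_cons]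
      calc padicValNat 2 (f a).factorial + ∑ i ∈ s, padicValNat 2 (f i).factorial
          ≤ padicValNat 2 (f a).factorial + padicValNat 2 (∑ i ∈ s, f i).factorial := by omega
        _ ≤ _ := e_add_le _ _

lemma e_sum_lt {ι : Type*} [DecidableEq ι] (s : Finset ι) (f : ι → ℕ) {a b : ι}
    (has : a ∈ s) (hbs : b ∈ s) (hab : a ≠ b) (hfab : f a = f b) (hfa : 1 ≤ f a) :
    (∑ i ∈ s, padicValNat 2 (f i).factorial) + 1 ≤ padicValNat 2 (∑ i ∈ s, f i).factorial := by
  have hb' : b ∈ s.erase a := Finset.mem_erase.mpr ⟨hab.symm, hbs⟩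
  have h1 : ∑ i ∈ s, f i = f a + (f b + ∑ i ∈ (s.erase a).erase b, f i) := by
    rw [← Finset.add_sum_erase s f has, ← Finset.add_sum_erase _ f hb']
  have h2 : ∑ i ∈ s, padicValNat 2 (f i).factorial
      = padicValNat 2 (f a).factorial + (padicValNat 2 (f b).factorial
        + ∑ i ∈ (s.erase a).erase b, padicValNat 2 (f i).factorial) := by
    rw [← Finset.add_sum_erase s _ has, ← Finset.add_sum_erase _ _ hb']
  have k1 : padicValNat 2 (f a).factorial + padicValNat 2 (f b).factorial + 1
      ≤ padicValNat 2 (f a + f b).factorial := by rw [← hfab]; exact e_two_mul hfa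
  have k2 := e_sum_le ((s.erase a).erase b) f
  have k3 := e_add_le (f a + f b) (∑ i ∈ (s.erase a).erase b, f i)
  rw [h1, h2, ← add_assoc (f a) (f b)]
  omega

/-! ### Facts extracted from the hypothesis on `B` -/

lemma hB_ne {B : ℕ → ℚ} (hB : ∀ ℓ : ℕ, ord (B ℓ) = (-(p ℓ : ℤ) : WithTop ℤ)) (i : ℕ) :
    B i ≠ 0 := by
  intro h
  have := hB i
  rw [ord, if_pos h] at this
  exact (WithTop.top_ne_coe) this

lemma hB_val {B : ℕ → ℚ} (hB : ∀ ℓ : ℕ, ord (B ℓ) = (-(p ℓ : ℤ) : WithTop ℤ)) (i : ℕ) :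
    padicValRat 2 (B i) = -(p i : ℤ) := by
  have := hB i
  rw [ord, if_neg (hB_ne hB i)] at this
  exact_mod_cast this

lemma hB_norm {B : ℕ → ℚ} (hB : ∀ ℓ : ℕ, ord (B ℓ) = (-(p ℓ : ℤ) : WithTop ℤ)) (i : ℕ) :
    ‖((B i : ℚ) : ℚ_[2])‖ = (2:ℝ) ^ (p i : ℤ) := by
  rw [Padic.eq_padicNorm, padicNorm.eq_zpow_of_nonzero (hB_ne hB i), hB_val hB i]
  push_cast
  norm_num

/-! ### Norm computations in `ℚ_[2]` -/

lemma two_cast : ((2:ℕ) : ℚ_[2]) = (2 : ℚ_[2]) := by norm_cast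

lemma norm_two_pow_qp (n : ℕ) : ‖(2 : ℚ_[2])^n‖ = (2:ℝ)^(-(n:ℤ)) := by
  rw [← two_cast]; exact Padic.norm_p_pow n

lemma norm_nat_le_one (n : ℕ) : ‖((n:ℕ) : ℚ_[2])‖ ≤ 1 := by
  have := Padic.norm_int_le_one (p := 2) (n : ℤ)
  simpa using this

lemma norm_sum_le_max {ι : Type*} (s : Finset ι) (f : ι → ℚ_[2]) {C : ℝ} (hC : 0 ≤ C)
    (h : ∀ i ∈ s, ‖f i‖ ≤ C) : ‖∑ i ∈ s, f i‖ ≤ C := by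
  induction s using Finset.cons_induction with
  | empty => simpa using hC
  | cons a s ha ih =>
      rw [Finset.sum_cons]
      refine le_trans (Padic.nonarchimedean _ _) (max_le (h a (Finset.mem_cons_self a s)) ?_)
      exact ih fun i hi => h i (Finset.mem_cons_of_mem hi)

lemma prod_zpow' {ι : Type*} (s : Finset ι) (f : ι → ℤ) :
    ∏ i ∈ s, (2:ℝ) ^ (f i) = 2 ^ (∑ i ∈ s, f i) := by
  induction s using Finset.cons_induction with
  | empty => simp
  | cons a s ha ih => rw [Finset.prod_cons, Finset.sum_cons, ih, zpow_add₀ (two_ne_zero)]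

lemma atom_norm {B : ℕ → ℚ} (hB : ∀ ℓ : ℕ, ord (B ℓ) = (-(p ℓ : ℤ) : WithTop ℤ))
    {j ℓ : ℕ} (v : Fin j → ℕ) (hsum : ∑ t, (v t + 1) = ℓ + 1) :
    ‖(2:ℚ_[2])^(p ℓ) * ∏ t, ((B (v t) : ℚ) : ℚ_[2])‖
      = (2:ℝ) ^ ((∑ t, (padicValNat 2 (Nat.factorial (v t + 1)) : ℤ))
          - (padicValNat 2 (Nat.factorial (ℓ+1)) : ℤ)) := by
  rw [norm_mul, norm_two_pow_qp, norm_prod]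
  have h1 : ∀ t ∈ (univ : Finset (Fin j)), ‖((B (v t) : ℚ) : ℚ_[2])‖ = (2:ℝ) ^ (p (v t) : ℤ) :=
    fun t _ => hB_norm hB (v t)
  rw [Finset.prod_congr rfl h1, prod_zpow', ← zpow_add₀ (two_ne_zero (α := ℝ))]
  congr 1
  have h2 : ∑ t, (p (v t) : ℤ)
      = (∑ t, ((v t + 1 : ℕ) : ℤ)) + ∑ t, (padicValNat 2 (Nat.factorial (v t + 1)) : ℤ) := by
    rw [← Finset.sum_add_distrib]
    refine Finset.sum_congr rfl fun t _ => ?_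
    simp only [p]
    push_cast
    ring
  have h3 : (∑ t, ((v t + 1 : ℕ) : ℤ)) = ((ℓ : ℤ) + 1) := by
    rw [← Nat.cast_sum]
    exact_mod_cast congrArg (Nat.cast : ℕ → ℤ) hsum
  rw [h2, h3]
  simp only [p]
  push_cast
  ring

lemma atom_norm_le_one {B : ℕ → ℚ} (hB : ∀ ℓ : ℕ, ord (B ℓ) = (-(p ℓ : ℤ) : WithTop ℤ))
    {j ℓ : ℕ} (v : Fin j → ℕ) (hsum : ∑ t, (v t + 1) = ℓ + 1) :
    ‖(2:ℚ_[2])^(p ℓ) * ∏ t, ((B (v t) : ℚ) : ℚ_[2])‖ ≤ 1 := by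
  rw [atom_norm hB v hsum]
  have h := e_sum_le (univ : Finset (Fin j)) (fun t => v t + 1)
  rw [hsum] at h
  calc (2:ℝ) ^ ((∑ t, (padicValNat 2 (Nat.factorial (v t + 1)) : ℤ))
          - (padicValNat 2 (Nat.factorial (ℓ+1)) : ℤ))
      ≤ (2:ℝ) ^ (0:ℤ) := by
        apply zpow_le_zpow_right₀ one_le_two
        have : (∑ t, (padicValNat 2 (Nat.factorial (v t + 1)) : ℤ))
            ≤ (padicValNat 2 (Nat.factorial (ℓ+1)) : ℤ) := by exact_mod_cast h
        omega
    _ = 1 := zpow_zero 2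

lemma atom_norm_le_half {B : ℕ → ℚ} (hB : ∀ ℓ : ℕ, ord (B ℓ) = (-(p ℓ : ℤ) : WithTop ℤ))
    {j ℓ : ℕ} (v : Fin j → ℕ) (hsum : ∑ t, (v t + 1) = ℓ + 1) {t0 t1 : Fin j}
    (hne : t0 ≠ t1) (heq : v t0 = v t1) :
    ‖(2:ℚ_[2])^(p ℓ) * ∏ t, ((B (v t) : ℚ) : ℚ_[2])‖ ≤ (2:ℝ)^(-1:ℤ) := by
  rw [atom_norm hB v hsum]
  have h := e_sum_lt (univ : Finset (Fin j)) (fun t => v t + 1) (Finset.mem_univ t0)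
    (Finset.mem_univ t1) hne (by simpa using heq) (by simp)
  rw [hsum] at h
  apply zpow_le_zpow_right₀ one_le_two
  have : (∑ t, (padicValNat 2 (Nat.factorial (v t + 1)) : ℤ)) + 1
      ≤ (padicValNat 2 (Nat.factorial (ℓ+1)) : ℤ) := by exact_mod_cast h
  omega

/-! ### The ball of radius 1/2 and the involution argument -/

noncomputable def J : AddSubgroup ℚ_[2] where
  carrier := {x | ‖x‖ ≤ (2:ℝ)^(-1:ℤ)}
  add_mem' := fun ha hb => le_trans (Padic.nonarchimedean _ _) (max_le ha hb)
  zero_mem' := by norm_num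
  neg_mem' := fun h => by simpa using h

lemma mem_J {x : ℚ_[2]} (h : ‖x‖ ≤ (2:ℝ)^(-1:ℤ)) : x ∈ J := h

lemma tail_le {B : ℕ → ℚ} (hB : ∀ ℓ : ℕ, ord (B ℓ) = (-(p ℓ : ℤ) : WithTop ℤ))
    {ℓ j : ℕ} (hj2 : 2 ≤ j) (hjl : j ≤ ℓ + 1) :
    ‖∑ v ∈ Finset.Nat.antidiagonalTuple j (ℓ+1-j),
        (2:ℚ_[2])^(p ℓ) * ∏ t, ((B (v t) : ℚ) : ℚ_[2])‖ ≤ (2:ℝ)^(-1:ℤ) := by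
  set F : (Fin j → ℕ) → ℚ_[2] :=
    fun v => (2:ℚ_[2])^(p ℓ) * ∏ t, ((B (v t) : ℚ) : ℚ_[2]) with hF
  have hsum : ∀ v ∈ Finset.Nat.antidiagonalTuple j (ℓ+1-j), ∑ t, (v t + 1) = ℓ + 1 := by
    intro v hv
    rw [Finset.Nat.mem_antidiagonalTuple] at hv
    rw [Finset.sum_add_distrib, hv]
    simp only [Finset.sum_const, Finset.card_univ, Fintype.card_fin, smul_eq_mul, mul_one]
    omega
  set t0 : Fin j := ⟨0, by omega⟩ with ht0
  set t1 : Fin j := ⟨1, by omega⟩ with ht1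
  have ht01 : t0 ≠ t1 := by simp [ht0, ht1]
  have hFswap : ∀ v : Fin j → ℕ, F (v ∘ Equiv.swap t0 t1) = F v := by
    intro v
    simp only [hF]
    congr 1
    exact Equiv.prod_comp (Equiv.swap t0 t1) (fun t => ((B (v t) : ℚ) : ℚ_[2]))
  suffices hmem : (∑ v ∈ Finset.Nat.antidiagonalTuple j (ℓ+1-j), F v) ∈ J by exact hmem
  rw [← QuotientAddGroup.eq_zero_iff (N := J), ← QuotientAddGroup.mk'_apply,
    map_sum (QuotientAddGroup.mk' J)]
  refine Finset.sum_involution (fun v _ => v ∘ Equiv.swap t0 t1) ?_ ?_ ?_ ?_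
  · intro v hv
    rw [hFswap v, ← map_add, QuotientAddGroup.mk'_apply, QuotientAddGroup.eq_zero_iff]
    apply mem_J
    have : F v + F v = 2 * F v := (two_mul (F v)).symm
    rw [this, norm_mul, ← two_cast, Padic.norm_p]
    calc ((2:ℕ):ℝ)⁻¹ * ‖F v‖ ≤ ((2:ℕ):ℝ)⁻¹ * 1 := by
          apply mul_le_mul_of_nonneg_left (atom_norm_le_one hB v (hsum v hv)) (by norm_num)
      _ = (2:ℝ)^(-1:ℤ) := by norm_num
  · intro v hv hne
    contrapose! hne
    have heq : v t0 = v t1 := by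
      have := congrFun hne t0
      simpa [Equiv.swap_apply_left] using this.symm
    rw [QuotientAddGroup.mk'_apply, QuotientAddGroup.eq_zero_iff]
    exact mem_J (atom_norm_le_half hB v (hsum v hv) ht01 heq)
  · intro v hv
    rw [Finset.Nat.mem_antidiagonalTuple] at hv ⊢
    exact (Equiv.sum_comp (Equiv.swap t0 t1) v).trans hv
  · intro v hv
    funext t
    simp [Function.comp, Equiv.swap_apply_self]

end OrdMSubP

theorem ord_M_sub_P (B : ℕ → ℚ)
    (hB : ∀ ℓ : ℕ, ord (B ℓ) = (-(p ℓ : ℤ) : WithTop ℤ)) :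
    ∀ ℓ : ℕ, 1 ≤ ℓ →
      ord (M B (ℓ + 1) - P B ℓ) = (-(p ℓ : ℤ) : WithTop ℤ) ∧ M B (ℓ + 1) ≠ P B ℓ := by
  intro ℓ hℓ
  classical
  open OrdMSubP in
  have hM : M B (ℓ+1) = ∑ j ∈ Finset.Icc 1 (ℓ+1), ((ℓ+1).choose j : ℚ) *
      ∑ v ∈ Finset.Nat.antidiagonalTuple j (ℓ+1-j), ∏ t, B (v t) := rfl
  have hP : ∑ j ∈ Finset.Icc 1 (ℓ+1), (ℓ.choose j : ℚ) *
      (∑ v ∈ Finset.Nat.antidiagonalTuple j (ℓ+1-j), ∏ t, B (v t)) = P B ℓ := by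
    rw [Finset.sum_Icc_succ_top (by omega : 1 ≤ ℓ+1), Nat.choose_succ_self]
    simp [P]
  have hD : M B (ℓ+1) - P B ℓ = ∑ j ∈ Finset.Icc 1 (ℓ+1), (ℓ.choose (j-1) : ℚ) *
      ∑ v ∈ Finset.Nat.antidiagonalTuple j (ℓ+1-j), ∏ t, B (v t) := by
    rw [hM, ← hP, ← Finset.sum_sub_distrib]
    refine Finset.sum_congr rfl fun j hj => ?_
    obtain ⟨k, rfl⟩ : ∃ k, j = k + 1 := ⟨j-1, by
      have := (Finset.mem_Icc.mp hj).1; omega⟩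
    rw [← sub_mul]
    congr 1
    rw [Nat.add_sub_cancel, Nat.choose_succ_succ]
    push_cast
    ring
  have hsplit : M B (ℓ+1) - P B ℓ = B ℓ +
      ∑ j ∈ (Finset.Icc 1 (ℓ+1)).erase 1, (ℓ.choose (j-1) : ℚ) *
        ∑ v ∈ Finset.Nat.antidiagonalTuple j (ℓ+1-j), ∏ t, B (v t) := by
    rw [hD, ← Finset.add_sum_erase _ _ (Finset.mem_Icc.mpr ⟨le_refl 1, by omega⟩)]
    congr 1
    simp [Finset.Nat.antidiagonalTuple_one]
  set D : ℚ := M B (ℓ+1) - P B ℓ with hDdef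
  have hDcast : ((D : ℚ) : ℚ_[2]) = ((B ℓ : ℚ) : ℚ_[2]) +
      ∑ j ∈ (Finset.Icc 1 (ℓ+1)).erase 1, ((ℓ.choose (j-1) : ℕ) : ℚ_[2]) *
        ∑ v ∈ Finset.Nat.antidiagonalTuple j (ℓ+1-j), ∏ t, ((B (v t) : ℚ) : ℚ_[2]) := by
    rw [hsplit]
    push_cast
    rfl
  have hx : (2:ℚ_[2])^(p ℓ) * ((D : ℚ) : ℚ_[2])
      = (2:ℚ_[2])^(p ℓ) * ((B ℓ : ℚ) : ℚ_[2])
        + ∑ j ∈ (Finset.Icc 1 (ℓ+1)).erase 1, ((ℓ.choose (j-1) : ℕ) : ℚ_[2]) *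
          ∑ v ∈ Finset.Nat.antidiagonalTuple j (ℓ+1-j),
            ((2:ℚ_[2])^(p ℓ) * ∏ t, ((B (v t) : ℚ) : ℚ_[2])) := by
    rw [hDcast, mul_add, Finset.mul_sum]
    congr 1
    refine Finset.sum_congr rfl fun j hj => ?_
    rw [← Finset.mul_sum]
    ring
  have h1 : ‖(2:ℚ_[2])^(p ℓ) * ((B ℓ : ℚ) : ℚ_[2])‖ = 1 := by
    rw [norm_mul, norm_two_pow_qp, hB_norm hB ℓ, ← zpow_add₀ (two_ne_zero (α := ℝ))]
    norm_num
  have h2 : ‖∑ j ∈ (Finset.Icc 1 (ℓ+1)).erase 1, ((ℓ.choose (j-1) : ℕ) : ℚ_[2]) *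
      ∑ v ∈ Finset.Nat.antidiagonalTuple j (ℓ+1-j),
        ((2:ℚ_[2])^(p ℓ) * ∏ t, ((B (v t) : ℚ) : ℚ_[2]))‖ ≤ (2:ℝ)^(-1:ℤ) := by
    refine norm_sum_le_max _ _ (by norm_num) fun j hj => ?_
    have hj' : 2 ≤ j ∧ j ≤ ℓ+1 := by
      rw [Finset.mem_erase, Finset.mem_Icc] at hj
      omega
    rw [norm_mul]
    calc ‖((ℓ.choose (j-1) : ℕ) : ℚ_[2])‖ * ‖∑ v ∈ Finset.Nat.antidiagonalTuple j (ℓ+1-j),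
          ((2:ℚ_[2])^(p ℓ) * ∏ t, ((B (v t) : ℚ) : ℚ_[2]))‖
        ≤ 1 * ((2:ℝ)^(-1:ℤ)) := by
          apply mul_le_mul (norm_nat_le_one _) (tail_le hB hj'.1 hj'.2) (norm_nonneg _)
            zero_le_one
      _ = (2:ℝ)^(-1:ℤ) := one_mul _
  have hxnorm : ‖(2:ℚ_[2])^(p ℓ) * ((D : ℚ) : ℚ_[2])‖ = 1 := by
    rw [hx, Padic.add_eq_max_of_ne (by
      rw [h1]
      intro hcon
      rw [← hcon] at h2
      norm_num at h2), h1]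
    exact max_eq_left (le_trans h2 (by norm_num))
  have hDnorm : ‖((D : ℚ) : ℚ_[2])‖ = (2:ℝ)^(p ℓ : ℤ) := by
    rw [norm_mul, norm_two_pow_qp] at hxnorm
    calc ‖((D : ℚ) : ℚ_[2])‖
        = (2:ℝ)^(p ℓ : ℤ) * ((2:ℝ)^(-(p ℓ : ℤ)) * ‖((D : ℚ) : ℚ_[2])‖) := by
          rw [← mul_assoc, ← zpow_add₀ (two_ne_zero (α := ℝ))]
          norm_num
      _ = (2:ℝ)^(p ℓ : ℤ) := by rw [hxnorm, mul_one]
  have hDne : D ≠ 0 := by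
    intro h
    rw [h] at hDnorm
    simp only [Rat.cast_zero, norm_zero] at hDnorm
    have : (0:ℝ) < (2:ℝ)^(p ℓ : ℤ) := by positivity
    linarith [hDnorm ▸ this]
  have hval : padicValRat 2 D = -(p ℓ : ℤ) := by
    rw [Padic.eq_padicNorm, padicNorm.eq_zpow_of_nonzero hDne] at hDnorm
    have h' : (2:ℝ)^(-padicValRat 2 D) = (2:ℝ)^(p ℓ : ℤ) := by
      rw [← hDnorm]
      push_cast
      norm_num
    have := zpow_right_injective₀ (by norm_num : (0:ℝ) < 2) (by norm_num : (2:ℝ) ≠ 1) h'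
    omega
  refine ⟨?_, sub_ne_zero.mp hDne⟩
  rw [ord, if_neg hDne, hval]
  exact_mod_cast rfl
end

section
/- Let (B_ℓ)_{ℓ≥0} be a sequence of rational numbers with ord(B_ℓ) = −p_ℓ for every ℓ ≥ 0. Then for every ℓ ≥ 1, ord(B_0 · M_ℓ) > −p_ℓ = ord(B_ℓ). -/
open scoped BigOperators

namespace OrdAux

/-- `V n q` : `q = 0` or the 2-adic valuation of `q` is at least `n`. -/
def V (n : ℤ) (q : ℚ) : Prop := q = 0 ∨ n ≤ padicValRat 2 q

lemma V_mono {m n : ℤ} {q : ℚ} (h : m ≤ n) (hq : V n q) : V m q :=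
  hq.imp id fun h' => le_trans h h'

lemma V_exact {n : ℤ} {q : ℚ} (hq : q ≠ 0) (h : padicValRat 2 q = n) : V n q :=
  Or.inr h.ge

lemma V_add {n : ℤ} {q r : ℚ} (hq : V n q) (hr : V n r) : V n (q + r) := by
  rcases hq with h | h
  · simpa [h] using hr
  rcases hr with h' | h'
  · rw [h', add_zero]; exact Or.inr h
  by_cases hqr : q + r = 0
  · exact Or.inl hqr
  · exact Or.inr (le_trans (le_min h h') (padicValRat.min_le_padicValRat_add hqr))

lemma V_mul {a b : ℤ} {q r : ℚ} (hq : V a q) (hr : V b r) : V (a + b) (q * r) := by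
  by_cases hq0 : q = 0
  · exact Or.inl (by simp [hq0])
  by_cases hr0 : r = 0
  · exact Or.inl (by simp [hr0])
  rcases hq with h | h
  · exact absurd h hq0
  rcases hr with h' | h'
  · exact absurd h' hr0
  exact Or.inr (by rw [padicValRat.mul hq0 hr0]; exact add_le_add h h')

lemma V_sum {ι : Type*} {n : ℤ} {s : Finset ι} {f : ι → ℚ} (h : ∀ i ∈ s, V n (f i)) :
    V n (∑ i ∈ s, f i) := by
  classical
  induction s using Finset.induction_on with
  | empty => exact Or.inl (by simp)
  | insert _ _ hx ih =>
      rw [Finset.sum_insert hx]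
      exact V_add (h _ (Finset.mem_insert_self _ _))
        (ih fun i hi => h i (Finset.mem_insert_of_mem hi))

lemma padicValRat_prod {ι : Type*} (s : Finset ι) (f : ι → ℚ) (h : ∀ i ∈ s, f i ≠ 0) :
    padicValRat 2 (∏ i ∈ s, f i) = ∑ i ∈ s, padicValRat 2 (f i) := by
  classical
  induction s using Finset.induction_on with
  | empty => simp
  | insert _ _ hx ih =>
      rw [Finset.prod_insert hx, Finset.sum_insert hx,
        padicValRat.mul (h _ (Finset.mem_insert_self _ _))
          (Finset.prod_ne_zero_iff.2 fun i hi => h i (Finset.mem_insert_of_mem hi)),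
        ih fun i hi => h i (Finset.mem_insert_of_mem hi)]

lemma padicValNat_prod {ι : Type*} (s : Finset ι) (f : ι → ℕ) (h : ∀ i ∈ s, f i ≠ 0) :
    padicValNat 2 (∏ i ∈ s, f i) = ∑ i ∈ s, padicValNat 2 (f i) := by
  classical
  induction s using Finset.induction_on with
  | empty => simp
  | insert _ _ hx ih =>
      rw [Finset.prod_insert hx, Finset.sum_insert hx,
        padicValNat.mul (h _ (Finset.mem_insert_self _ _))
          (Finset.prod_ne_zero_iff.2 fun i hi => h i (Finset.mem_insert_of_mem hi)),
        ih fun i hi => h i (Finset.mem_insert_of_mem hi)]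

lemma padicValNat_le_of_dvd {a b : ℕ} (ha : a ≠ 0) (hb : b ≠ 0) (h : a ∣ b) :
    padicValNat 2 a ≤ padicValNat 2 b := by
  have h2 := (Nat.factorization_le_iff_dvd ha hb).2 h
  have h3 := Finsupp.le_def.mp h2 2
  rwa [Nat.factorization_def _ Nat.prime_two, Nat.factorization_def _ Nat.prime_two] at h3

lemma two_mul_fact_fact_dvd (b : ℕ) :
    2 * (Nat.factorial (b + 1) * Nat.factorial (b + 1)) ∣ Nat.factorial (2 * (b + 1)) := by
  have h1 : (2 * (b + 1)).choose (b + 1) = 2 * (2 * b + 1).choose (b + 1) := by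
    have h2 : 2 * (b + 1) = (2 * b + 1) + 1 := by ring
    rw [h2, Nat.choose_succ_succ]
    have h3 : (2 * b + 1).choose b = (2 * b + 1).choose (b + 1) := by
      have h4 := Nat.choose_symm (n := 2 * b + 1) (k := b) (by omega)
      rw [show 2 * b + 1 - b = b + 1 by omega] at h4
      exact h4.symm
    simp only [Nat.succ_eq_add_one]
    omega
  have h4 := Nat.choose_mul_factorial_mul_factorial (show b + 1 ≤ 2 * (b + 1) by omega)
  rw [show 2 * (b + 1) - (b + 1) = b + 1 by omega] at h4
  exact ⟨(2 * b + 1).choose (b + 1), by rw [← h4, h1]; ring⟩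

lemma sum_succ_eq {j ℓ : ℕ} (hjℓ : j ≤ ℓ) {v : Fin j → ℕ}
    (hv : v ∈ Finset.Nat.antidiagonalTuple j (ℓ - j)) :
    ∑ t : Fin j, (v t + 1) = ℓ := by
  have hs : ∑ t : Fin j, v t = ℓ - j := Finset.Nat.mem_antidiagonalTuple.mp hv
  have h1 : ∑ t : Fin j, (v t + 1) = (∑ t : Fin j, v t) + ∑ _t : Fin j, 1 :=
    Finset.sum_add_distrib
  have h2 : ∑ _t : Fin j, (1 : ℕ) = j := by simp
  omega

lemma prod_fact_ne {j : ℕ} (v : Fin j → ℕ) :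
    (∏ t : Fin j, Nat.factorial (v t + 1)) ≠ 0 :=
  Finset.prod_ne_zero_iff.2 fun _ _ => Nat.factorial_ne_zero _

lemma S_le_G {j ℓ : ℕ} {v : Fin j → ℕ} (hsum : ∑ t : Fin j, (v t + 1) = ℓ) :
    ∑ t : Fin j, padicValNat 2 (Nat.factorial (v t + 1))
      ≤ padicValNat 2 (Nat.factorial ℓ) := by
  have hd : (∏ t : Fin j, Nat.factorial (v t + 1)) ∣ Nat.factorial ℓ := by
    rw [← hsum]; exact Nat.prod_factorial_dvd_factorial_sum _ _
  have h := padicValNat_le_of_dvd (prod_fact_ne v) (Nat.factorial_ne_zero ℓ) hd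
  rwa [padicValNat_prod _ _ fun t _ => Nat.factorial_ne_zero _] at h

lemma e_dvd {j ℓ : ℕ} {v : Fin j → ℕ} {i0 i1 : Fin j} (hne01 : i0 ≠ i1)
    (heq : v i0 = v i1) (hsum : ∑ t : Fin j, (v t + 1) = ℓ) :
    2 * ∏ t : Fin j, Nat.factorial (v t + 1) ∣ Nat.factorial ℓ := by
  classical
  have hi1 : i1 ∈ Finset.univ.erase i0 := Finset.mem_erase.2 ⟨hne01.symm, Finset.mem_univ _⟩
  have hprod : ∏ t : Fin j, Nat.factorial (v t + 1)
      = Nat.factorial (v i0 + 1) *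
        (Nat.factorial (v i1 + 1) * ∏ t ∈ (Finset.univ.erase i0).erase i1, Nat.factorial (v t + 1)) := by
    rw [Finset.mul_prod_erase _ (fun t => Nat.factorial (v t + 1)) hi1,
      Finset.mul_prod_erase _ (fun t => Nat.factorial (v t + 1)) (Finset.mem_univ i0)]
  have hsum2 : (v i0 + 1) + ((v i1 + 1) + ∑ t ∈ (Finset.univ.erase i0).erase i1, (v t + 1)) = ℓ := by
    rw [Finset.add_sum_erase _ (fun t => v t + 1) hi1,
      Finset.add_sum_erase _ (fun t => v t + 1) (Finset.mem_univ i0)]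
    exact hsum
  have hP := Nat.prod_factorial_dvd_factorial_sum ((Finset.univ.erase i0).erase i1) fun t => v t + 1
  have h2a := two_mul_fact_fact_dvd (v i0)
  have hmul := mul_dvd_mul h2a hP
  have hadd := Nat.factorial_mul_factorial_dvd_factorial_add (2 * (v i0 + 1))
    (∑ t ∈ (Finset.univ.erase i0).erase i1, (v t + 1))
  have hfin : 2 * (v i0 + 1) + ∑ t ∈ (Finset.univ.erase i0).erase i1, (v t + 1) = ℓ := by omega
  calc 2 * ∏ t : Fin j, Nat.factorial (v t + 1)
      = 2 * (Nat.factorial (v i0 + 1) * Nat.factorial (v i0 + 1)) *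
          ∏ t ∈ (Finset.univ.erase i0).erase i1, Nat.factorial (v t + 1) := by rw [hprod, ← heq]; ring
    _ ∣ Nat.factorial (2 * (v i0 + 1)) * Nat.factorial (∑ t ∈ (Finset.univ.erase i0).erase i1, (v t + 1)) := hmul
    _ ∣ Nat.factorial (2 * (v i0 + 1) + ∑ t ∈ (Finset.univ.erase i0).erase i1, (v t + 1)) := hadd
    _ = Nat.factorial ℓ := by rw [hfin]

lemma S_lt_G {j ℓ : ℕ} {v : Fin j → ℕ} {i0 i1 : Fin j} (hne01 : i0 ≠ i1)
    (heq : v i0 = v i1) (hsum : ∑ t : Fin j, (v t + 1) = ℓ) :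
    (∑ t : Fin j, padicValNat 2 (Nat.factorial (v t + 1))) + 1
      ≤ padicValNat 2 (Nat.factorial ℓ) := by
  have hd := e_dvd hne01 heq hsum
  have h1 := padicValNat_le_of_dvd (mul_ne_zero two_ne_zero (prod_fact_ne v))
    (Nat.factorial_ne_zero ℓ) hd
  rw [padicValNat.mul two_ne_zero (prod_fact_ne v), padicValNat.self one_lt_two,
    padicValNat_prod _ _ fun t _ => Nat.factorial_ne_zero _] at h1
  omega

lemma prod_B_val {B : ℕ → ℚ} (hne : ∀ i, B i ≠ 0)
    (hval : ∀ i, padicValRat 2 (B i) = -(p i : ℤ))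
    {j ℓ : ℕ} {v : Fin j → ℕ} (hsum : ∑ t : Fin j, (v t + 1) = ℓ) :
    padicValRat 2 (∏ t : Fin j, B (v t))
      = -(ℓ : ℤ) - ∑ t : Fin j, (padicValNat 2 (Nat.factorial (v t + 1)) : ℤ) := by
  rw [padicValRat_prod _ _ fun t _ => hne (v t)]
  have h1 : ∀ t : Fin j, padicValRat 2 (B (v t))
      = -(((v t + 1 : ℕ) : ℤ) + (padicValNat 2 (Nat.factorial (v t + 1)) : ℤ)) := by
    intro t
    rw [hval (v t)]
    simp only [p]
    push_cast
    ring
  rw [Finset.sum_congr rfl fun t _ => h1 t, Finset.sum_neg_distrib,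
    Finset.sum_add_distrib]
  have h3 : ∑ t : Fin j, ((v t + 1 : ℕ) : ℤ) = (ℓ : ℤ) := by
    rw [← Nat.cast_sum, hsum]
  rw [h3]
  ring

lemma V_M {B : ℕ → ℚ} (hne : ∀ i, B i ≠ 0)
    (hval : ∀ i, padicValRat 2 (B i) = -(p i : ℤ)) {ℓ : ℕ} (hℓ : 1 ≤ ℓ) :
    V (1 - (ℓ : ℤ) - (padicValNat 2 (Nat.factorial (ℓ + 1)) : ℤ)) (M B ℓ) := by
  classical
  have hGF : (padicValNat 2 (Nat.factorial ℓ) : ℤ)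
      ≤ (padicValNat 2 (Nat.factorial (ℓ + 1)) : ℤ) := by
    exact_mod_cast padicValNat_le_of_dvd (Nat.factorial_ne_zero ℓ)
      (Nat.factorial_ne_zero (ℓ + 1)) (Nat.factorial_dvd_factorial (Nat.le_succ ℓ))
  have tupleV : ∀ {j : ℕ}, j ≤ ℓ → ∀ v ∈ Finset.Nat.antidiagonalTuple j (ℓ - j),
      V (-(ℓ : ℤ) - (padicValNat 2 (Nat.factorial ℓ) : ℤ)) (∏ t : Fin j, B (v t)) := by
    intro j hj v hv
    have hsum := sum_succ_eq hj hv
    have hS : (∑ t : Fin j, (padicValNat 2 (Nat.factorial (v t + 1)) : ℤ))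
        ≤ (padicValNat 2 (Nat.factorial ℓ) : ℤ) := by exact_mod_cast S_le_G hsum
    have hVe := V_exact (Finset.prod_ne_zero_iff.2 fun t _ => hne (v t))
      (prod_B_val hne hval hsum)
    exact V_mono (by omega) hVe
  rw [M]
  refine V_sum fun j hj => ?_
  rw [Finset.mem_Icc] at hj
  obtain ⟨hj1, hjℓ⟩ := hj
  have hC0 : ((ℓ.choose j : ℚ)) ≠ 0 := by exact_mod_cast (Nat.choose_pos hjℓ).ne'
  have hCval : padicValRat 2 (ℓ.choose j : ℚ) = (padicValNat 2 (ℓ.choose j) : ℤ) :=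
    (padicValRat_of_nat _).symm
  have hC : V 0 ((ℓ.choose j : ℚ)) := Or.inr (by rw [hCval]; exact Int.natCast_nonneg _)
  by_cases h2ℓ : 2 ∣ ℓ + 1
  · -- ℓ odd: every term already has high valuation
    have hF1 : (padicValNat 2 (Nat.factorial ℓ) : ℤ) + 1
        ≤ (padicValNat 2 (Nat.factorial (ℓ + 1)) : ℤ) := by
      have hv2 : 1 ≤ padicValNat 2 (ℓ + 1) := one_le_padicValNat_of_dvd (by omega) h2ℓ
      have hmul : padicValNat 2 (Nat.factorial (ℓ + 1))
          = padicValNat 2 (ℓ + 1) + padicValNat 2 (Nat.factorial ℓ) := by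
        rw [Nat.factorial_succ, padicValNat.mul (by omega) (Nat.factorial_ne_zero ℓ)]
      omega
    have hX : V (1 - (ℓ : ℤ) - (padicValNat 2 (Nat.factorial (ℓ + 1)) : ℤ))
        (∑ v ∈ Finset.Nat.antidiagonalTuple j (ℓ - j), ∏ t, B (v t)) :=
      V_sum fun v hv => V_mono (by omega) (tupleV hjℓ v hv)
    have hfinal := V_mul hC hX
    rwa [zero_add] at hfinal
  · -- ℓ even
    have h2ℓ' : 2 ∣ ℓ := by omega
    by_cases hj2 : 2 ≤ j
    · -- j ≥ 2 : split the inner sum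
      set i0 : Fin j := ⟨0, by omega⟩ with hi0
      set i1 : Fin j := ⟨1, by omega⟩ with hi1'
      have hne01 : i0 ≠ i1 := by simp [hi0, hi1', Fin.ext_iff]
      set S := Finset.Nat.antidiagonalTuple j (ℓ - j) with hS
      set f : (Fin j → ℕ) → ℚ := fun v => ∏ t, B (v t) with hf
      have hswapmem : ∀ {v : Fin j → ℕ}, v ∈ S → (v ∘ Equiv.swap i0 i1) ∈ S := by
        intro v hv
        rw [hS, Finset.Nat.mem_antidiagonalTuple] at hv ⊢
        rw [← hv]
        exact Equiv.sum_comp (Equiv.swap i0 i1) v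
      have hswapval : ∀ v : Fin j → ℕ, f (v ∘ Equiv.swap i0 i1) = f v := by
        intro v
        exact Equiv.prod_comp (Equiv.swap i0 i1) fun t => B (v t)
      have hswap : ∑ v ∈ (S.filter fun v => ¬ v i0 = v i1).filter fun v => ¬ v i0 < v i1, f v
          = ∑ v ∈ (S.filter fun v => ¬ v i0 = v i1).filter fun v => v i0 < v i1, f v := by
        refine Finset.sum_nbij' (fun v => v ∘ Equiv.swap i0 i1) (fun v => v ∘ Equiv.swap i0 i1)
          ?_ ?_ ?_ ?_ ?_
        · intro v hv
          rw [Finset.mem_filter, Finset.mem_filter] at hv ⊢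
          obtain ⟨⟨hvS, hvne⟩, hvnlt⟩ := hv
          refine ⟨⟨hswapmem hvS, ?_⟩, ?_⟩
          · simpa [Function.comp, Equiv.swap_apply_left, Equiv.swap_apply_right] using
              (Ne.symm hvne)
          · simp only [Function.comp, Equiv.swap_apply_left, Equiv.swap_apply_right]
            omega
        · intro v hv
          rw [Finset.mem_filter, Finset.mem_filter] at hv ⊢
          obtain ⟨⟨hvS, hvne⟩, hvlt⟩ := hv
          refine ⟨⟨hswapmem hvS, ?_⟩, ?_⟩
          · simpa [Function.comp, Equiv.swap_apply_left, Equiv.swap_apply_right] using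
              (Ne.symm hvne)
          · simp only [Function.comp, Equiv.swap_apply_left, Equiv.swap_apply_right]
            omega
        · intro v _
          funext t
          simp [Function.comp, Equiv.swap_apply_self]
        · intro v _
          funext t
          simp [Function.comp, Equiv.swap_apply_self]
        · intro v _
          exact (hswapval v).symm
      have hsplit1 := Finset.sum_filter_add_sum_filter_not S (fun v => v i0 = v i1) f
      have hsplit2 := Finset.sum_filter_add_sum_filter_not
        (S.filter fun v => ¬ v i0 = v i1) (fun v => v i0 < v i1) f
      have hXsplit : ∑ v ∈ S, f v
          = (∑ v ∈ S.filter fun v => v i0 = v i1, f v)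
            + 2 * ∑ v ∈ (S.filter fun v => ¬ v i0 = v i1).filter fun v => v i0 < v i1, f v := by
        rw [← hsplit1, ← hsplit2, hswap]; ring
      have hE : V (1 - (ℓ : ℤ) - (padicValNat 2 (Nat.factorial ℓ) : ℤ))
          (∑ v ∈ S.filter fun v => v i0 = v i1, f v) := by
        refine V_sum fun v hv => ?_
        rw [Finset.mem_filter] at hv
        have hsum := sum_succ_eq hjℓ hv.1
        have hS1 : (∑ t : Fin j, (padicValNat 2 (Nat.factorial (v t + 1)) : ℤ)) + 1
            ≤ (padicValNat 2 (Nat.factorial ℓ) : ℤ) := by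
          exact_mod_cast S_lt_G hne01 hv.2 hsum
        have hVe := V_exact (Finset.prod_ne_zero_iff.2 fun t _ => hne (v t))
          (prod_B_val hne hval hsum)
        exact V_mono (by omega) hVe
      have hL : V (-(ℓ : ℤ) - (padicValNat 2 (Nat.factorial ℓ) : ℤ))
          (∑ v ∈ (S.filter fun v => ¬ v i0 = v i1).filter fun v => v i0 < v i1, f v) :=
        V_sum fun v hv =>
          tupleV hjℓ v (Finset.mem_filter.1 (Finset.mem_filter.1 hv).1).1
      have h2V : V 1 ((2 : ℚ)) := by
        refine Or.inr ?_
        rw [show ((2 : ℚ)) = ((2 : ℕ) : ℚ) by norm_num, ← padicValRat_of_nat]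
        simp
      have hterm1 := V_mul hC hE
      have hterm2 := V_mul hC (V_mul h2V hL)
      rw [hXsplit, mul_add]
      exact V_add (V_mono (by omega) hterm1) (V_mono (by omega) hterm2)
    · -- j = 1
      have hj1' : j = 1 := by omega
      subst hj1'
      have hCv : V 1 ((ℓ.choose 1 : ℚ)) := by
        rw [Nat.choose_one_right]
        refine Or.inr ?_
        rw [← padicValRat_of_nat]
        exact_mod_cast one_le_padicValNat_of_dvd (by omega) h2ℓ'
      have hX : V (-(ℓ : ℤ) - (padicValNat 2 (Nat.factorial ℓ) : ℤ))
          (∑ v ∈ Finset.Nat.antidiagonalTuple 1 (ℓ - 1), ∏ t, B (v t)) :=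
        V_sum fun v hv => tupleV hjℓ v hv
      have hfinal := V_mul hCv hX
      exact V_mono (by omega) hfinal

end OrdAux

theorem ord_B0_mul_M (B : ℕ → ℚ)
    (hB : ∀ ℓ : ℕ, ord (B ℓ) = (-(p ℓ : ℤ) : WithTop ℤ)) :
    ∀ ℓ : ℕ, 1 ≤ ℓ →
      (-(p ℓ : ℤ) : WithTop ℤ) < ord (B 0 * M B ℓ) ∧
      (-(p ℓ : ℤ) : WithTop ℤ) = ord (B ℓ) := by
  have key : ∀ i, B i ≠ 0 ∧ padicValRat 2 (B i) = -(p i : ℤ) := by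
    intro i
    have h := hB i
    rw [ord] at h
    split_ifs at h with h0
    · rw [← WithTop.LinearOrderedAddCommGroup.coe_neg] at h
      exact absurd h WithTop.top_ne_coe
    · exact ⟨h0, by exact_mod_cast h⟩
  intro ℓ hℓ
  refine ⟨?_, (hB ℓ).symm⟩
  have hM := OrdAux.V_M (fun i => (key i).1) (fun i => (key i).2) hℓ
  have hB0 : OrdAux.V (-1) (B 0) := by
    refine Or.inr ?_
    rw [(key 0).2]
    norm_num [p, Nat.factorial_one]
  have hprod := OrdAux.V_mul hB0 hM
  have hpe : (-1 : ℤ) + (1 - (ℓ : ℤ) - (padicValNat 2 (Nat.factorial (ℓ + 1)) : ℤ))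
      = -(p ℓ : ℤ) + 1 := by
    simp only [p]
    push_cast
    ring
  rw [hpe] at hprod
  by_cases hz : B 0 * M B ℓ = 0
  · rw [ord, if_pos hz]
    exact WithTop.coe_lt_top _
  · rw [ord, if_neg hz]
    rcases hprod with h0 | h
    · exact absurd h0 hz
    · have hlt : -(p ℓ : ℤ) < padicValRat 2 (B 0 * M B ℓ) := by omega
      exact_mod_cast WithTop.coe_lt_coe.2 hlt
end
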